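/- arXiv:1901.01978 — 7 statements merged into one kernel-verified Lean document; each statement's English description precedes it below -/
import Mathlib

section
/- Fix an integer N ≥ 2, functions F₁,…,F_N : ℝ → ℝ, a vector u* ∈ ℝ^N, and for each i a vector u^{(i)} ∈ ℝ^N. Set Hᵢ := Σ_{j≠i} F_j(u^{(i)}_j), H_max := max_i Hᵢ, F_total := Σ_{j=1}^N F_j(u*_j), and for a constant c ∈ ℝ define the Scaled VCG payment pᵢ(c) := c·Hᵢ − Σ_{j≠i} F_j(u*_j). If F_total > 0, Hᵢ > 0 for all i, and the Market Power Balance condition (N−1)·H_max ≤ Σᵢ Hᵢ holds, then (N−1)·F_total/Σᵢ Hᵢ ≤ F_total/H_max, and every c with (N−1)·F_total/Σᵢ Hᵢ ≤ c ≤ F_total/H_max satisfies budget balance Σᵢ pᵢ(c) ≥ 0 and individual rationality Fᵢ(u*_i) − pᵢ(c) ≥ 0 for every agent i. -/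
/-!
Write `vᵢ := Fᵢ(u*ᵢ)` and `V := Σᵢ vᵢ`. Each agent's payment charges `c·Hᵢ` and refunds the
welfare `V − vᵢ` of the others, so the payments total `c·Σᵢ Hᵢ − (N−1)·V` and agent `i` keeps
`vᵢ − pᵢ(c) = V − c·Hᵢ`. Budget balance is thus the lower bound on `c`, individual rationality
(for all `i` at once, via `Hᵢ ≤ H_max`) the upper bound, and Market Power Balance says exactly
that the interval between them is nonempty.
-/

open Finset

namespace ScaledVCG

variable {ι : Type*} [Fintype ι] [DecidableEq ι]

/-- `v j` is agent `j`'s welfare `F_j(u*_j)` at the social optimum and `H i` the welfare of the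
others when `i` is excluded. -/
def payment (v H : ι → ℝ) (c : ℝ) (i : ι) : ℝ :=
  c * H i - ∑ j ∈ univ.erase i, v j

theorem sum_sum_erase (v : ι → ℝ) :
    ∑ i, ∑ j ∈ univ.erase i, v j = ((Fintype.card ι : ℝ) - 1) * ∑ j, v j := by
  simp only [sum_erase_eq_sub (mem_univ _), sum_sub_distrib, sum_const, card_univ, nsmul_eq_mul]
  ring

theorem sum_payment (v H : ι → ℝ) (c : ℝ) :
    ∑ i, payment v H c i = c * ∑ i, H i - ((Fintype.card ι : ℝ) - 1) * ∑ j, v j := by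
  simp only [payment, sum_sub_distrib, ← mul_sum, sum_sum_erase]

theorem sub_payment (v H : ι → ℝ) (c : ℝ) (i : ι) :
    v i - payment v H c i = ∑ j, v j - c * H i := by
  rw [payment, sum_erase_eq_sub (mem_univ i)]
  ring

theorem sum_payment_nonneg {v H : ι → ℝ} {c : ℝ} (hH : 0 < ∑ i, H i)
    (hc : ((Fintype.card ι : ℝ) - 1) * (∑ j, v j) / ∑ i, H i ≤ c) :
    0 ≤ ∑ i, payment v H c i := by
  rw [sum_payment, sub_nonneg]
  rwa [div_le_iff₀ hH] at hc

theorem sub_payment_nonneg {v H : ι → ℝ} {c Hmax : ℝ} (hHmax : 0 < Hmax) (hle : ∀ i, H i ≤ Hmax)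
    (hc₀ : 0 ≤ c) (hc : c ≤ (∑ j, v j) / Hmax) (i : ι) :
    0 ≤ v i - payment v H c i := by
  rw [sub_payment, sub_nonneg]
  calc c * H i ≤ c * Hmax := mul_le_mul_of_nonneg_left (hle i) hc₀
    _ ≤ ∑ j, v j := (le_div_iff₀ hHmax).1 hc

theorem lower_scale_le_upper_scale {n V S Hmax : ℝ} (hV : 0 ≤ V) (hS : 0 < S) (hHmax : 0 < Hmax)
    (hbalance : n * Hmax ≤ S) :
    n * V / S ≤ V / Hmax := by
  rw [div_le_div_iff₀ hS hHmax]
  linarith [mul_le_mul_of_nonneg_left hbalance hV]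

end ScaledVCG

open ScaledVCG

/-- **Scaled VCG for static deterministic systems (Theorem 1).**
If `F_total > 0`, `Hᵢ > 0` for all `i`, and the Market Power Balance condition
`(N−1)·H_max ≤ Σᵢ Hᵢ` holds, then `(N−1)·F_total/Σᵢ Hᵢ ≤ F_total/H_max`, and every
scaling factor `c` in that interval yields budget balance and individual rationality. -/
theorem scaled_vcg_static
    (N : ℕ) (hN : 2 ≤ N)
    (F : Fin N → ℝ → ℝ) (ustar : Fin N → ℝ)
    (H : Fin N → ℝ)
    (Hmax : ℝ)
    (hHmax : Hmax = Finset.univ.sup' ⟨⟨0, by omega⟩, Finset.mem_univ _⟩ H)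
    (Ftotal : ℝ)
    (hFtotal : Ftotal = ∑ j, F j (ustar j))
    (p : Fin N → ℝ → ℝ)
    (hp : ∀ i c, p i c = c * H i - ∑ j ∈ Finset.univ.erase i, F j (ustar j))
    (hFpos : 0 < Ftotal)
    (hHpos : ∀ i, 0 < H i)
    (hMPB : ((N : ℝ) - 1) * Hmax ≤ ∑ i, H i) :
    ((N : ℝ) - 1) * Ftotal / (∑ i, H i) ≤ Ftotal / Hmax ∧
      ∀ c : ℝ, ((N : ℝ) - 1) * Ftotal / (∑ i, H i) ≤ c → c ≤ Ftotal / Hmax →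
        (0 ≤ ∑ i, p i c) ∧ ∀ i, 0 ≤ F i (ustar i) - p i c := by
  have i₀ : Fin N := ⟨0, by omega⟩
  have hle : ∀ i, H i ≤ Hmax := fun i => hHmax ▸ le_sup' H (mem_univ i)
  have hHmax_pos : 0 < Hmax := (hHpos i₀).trans_le (hle i₀)
  have hsum_pos : 0 < ∑ i, H i := sum_pos (fun i _ => hHpos i) ⟨i₀, mem_univ i₀⟩
  have hp' : p = fun i c => payment (fun j => F j (ustar j)) H c i := funext₂ hp
  have hN₁ : (0 : ℝ) ≤ N - 1 := by
    have : (2 : ℝ) ≤ N := by exact_mod_cast hN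
    linarith
  subst hp' hFtotal
  refine ⟨lower_scale_le_upper_scale hFpos.le hsum_pos hHmax_pos hMPB, fun c hc₁ hc₂ => ?_⟩
  have hc₀ : 0 ≤ c := (div_nonneg (mul_nonneg hN₁ hFpos.le) hsum_pos.le).trans hc₁
  exact ⟨sum_payment_nonneg hsum_pos (by rwa [Fintype.card_fin]),
    sub_payment_nonneg hHmax_pos hle hc₀ hc₂⟩
end

section
/- Let a : ℕ → ℝ and b : ℕ → ℝ be sequences with a̲ ≤ aᵢ ≤ ā < 0 and 0 < b̲ ≤ bᵢ ≤ b̄ for all i ≥ 1. For each N ≥ 2 let U*(N) ∈ ℝ^N be the unique maximizer of Σ_{i=1}^N (aᵢuᵢ² + bᵢuᵢ) subject to Σ_{i=1}^N uᵢ = 0, and let W*(N) ∈ ℝ^{N−1} (indexed by agents 2,…,N) be the unique maximizer of Σ_{i=2}^N (aᵢuᵢ² + bᵢuᵢ) subject to Σ_{i=2}^N uᵢ = 0. Then max_{2 ≤ j ≤ N} |U*(N)ⱼ − W*(N)ⱼ| → 0 as N → ∞; in fact max_{2 ≤ j ≤ N} |U*(N)ⱼ − W*(N)ⱼ| = O(1/N).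 -/
/-!
At a balanced optimum every agent has the same marginal welfare `2 aᵢ uᵢ + bᵢ = p` (the price),
and `p` lies between the smallest and the largest `bᵢ`, so every share `uᵢ = (p - bᵢ) / (2 aᵢ)`
is bounded. Removing agent `1` moves the price from `p` to `q`, so every remaining agent `j` moves
by `(p - q) / (2 aⱼ)`: all moves have the same sign and comparable sizes, and since both
allocations are balanced they add up to `-U₁`. Hence each of the `N - 1` moves is
`O(|U₁| / N) = O(1 / N)`.
-/

open Finset Filter

theorem eq_zero_of_forall_mul_add_mul_sq_nonpos {c d : ℝ} (h : ∀ t, c * t + d * t ^ 2 ≤ 0) :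
    c = 0 := by
  have hdisc : discrim (-d) (-c) 0 ≤ 0 := discrim_le_zero fun t => by nlinarith [h t]
  rw [discrim] at hdisc
  nlinarith [sq_nonneg c]

variable {ι : Type*} {a b u w : ι → ℝ} {s : Finset ι}

/-- The `dᵢ = D / aᵢ` share a sign and their sizes differ at most by the factor `alo / ahi`. -/
theorem card_mul_abs_le_of_mul_eq {t : Finset ι} {d : ι → ℝ} {alo ahi D : ℝ}
    (ha : ∀ i ∈ t, alo ≤ a i ∧ a i ≤ ahi) (hahi : ahi < 0) (hd : ∀ i ∈ t, a i * d i = D)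
    {j : ι} (hj : j ∈ t) : #t * |d j| ≤ alo / ahi * |∑ i ∈ t, d i| := by
  have hneg : ∀ i ∈ t, a i < 0 := fun i hi => (ha i hi).2.trans_lt hahi
  have hd_eq : ∀ i ∈ t, d i = D * (1 / a i) := fun i hi => by
    rw [← hd i hi]; field_simp [(hneg i hi).ne]
  have hdj : |d j| ≤ |D| / -ahi := by
    rw [hd_eq j hj, abs_mul, abs_div, abs_one, abs_of_neg (hneg j hj), div_eq_mul_one_div |D|]
    gcongr
    · linarith
    · linarith [(ha j hj).2]
  have hsum : #t / -alo ≤ |∑ i ∈ t, 1 / a i| := by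
    have hlo : ∑ i ∈ t, 1 / a i ≤ #t * (1 / alo) := by
      rw [← nsmul_eq_mul, ← sum_const]
      exact sum_le_sum fun i hi => one_div_le_one_div_of_neg_of_le (hneg i hi) (ha i hi).1
    calc (#t : ℝ) / -alo = -(#t * (1 / alo)) := by ring
      _ ≤ -∑ i ∈ t, 1 / a i := by linarith
      _ ≤ |∑ i ∈ t, 1 / a i| := neg_le_abs _
  have halo : alo < 0 := (ha j hj).1.trans_lt (hneg j hj)
  have hratio : 0 ≤ alo / ahi * |D| :=
    mul_nonneg (div_nonneg_of_nonpos halo.le hahi.le) (abs_nonneg D)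
  calc #t * |d j| ≤ #t * (|D| / -ahi) := by gcongr
    _ = alo / ahi * |D| * (#t / -alo) := by field_simp [halo.ne]
    _ ≤ alo / ahi * |D| * |∑ i ∈ t, 1 / a i| := by gcongr
    _ = alo / ahi * |∑ i ∈ t, d i| := by rw [sum_congr rfl hd_eq, ← mul_sum, abs_mul, mul_assoc]

structure IsBalancedOptimum (a b : ι → ℝ) (s : Finset ι) (u : ι → ℝ) : Prop where
  sum_eq_zero : ∑ i ∈ s, u i = 0
  welfare_le : ∀ v : ι → ℝ, ∑ i ∈ s, v i = 0 →
    ∑ i ∈ s, (a i * v i ^ 2 + b i * v i) ≤ ∑ i ∈ s, (a i * u i ^ 2 + b i * u i)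

namespace IsBalancedOptimum

theorem marginal_eq (hu : IsBalancedOptimum a b s u) {j k : ι} (hj : j ∈ s) (hk : k ∈ s) :
    2 * a j * u j + b j = 2 * a k * u k + b k := by
  classical
  rcases eq_or_ne j k with rfl | hjk
  · rfl
  -- Shift an amount `t` from agent `k` to agent `j`.
  suffices ∀ t : ℝ,
      ((2 * a j * u j + b j) - (2 * a k * u k + b k)) * t + (a j + a k) * t ^ 2 ≤ 0 by
    linarith [eq_zero_of_forall_mul_add_mul_sq_nonpos this]
  intro t
  set v : ι → ℝ := fun i => u i + (if i = j then t else 0) - (if i = k then t else 0)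
  have hv : ∑ i ∈ s, v i = 0 := by
    simp only [v, sum_sub_distrib, sum_add_distrib, sum_ite_eq', hj, hk, if_true, hu.sum_eq_zero]
    ring
  have hgain : ∑ i ∈ s, ((a i * v i ^ 2 + b i * v i) - (a i * u i ^ 2 + b i * u i)) =
      ((2 * a j * u j + b j) - (2 * a k * u k + b k)) * t + (a j + a k) * t ^ 2 := by
    rw [sum_eq_add_of_mem j k hj hk hjk fun i _ hi => by simp [v, hi.1, hi.2]]
    simp only [v, if_true, if_neg hjk, if_neg hjk.symm]
    ring
  linarith [hu.welfare_le v hv, sum_sub_distrib (s := s) (f := fun i => a i * v i ^ 2 + b i * v i)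
    (g := fun i => a i * u i ^ 2 + b i * u i)]

theorem exists_forall_marginal_eq (hu : IsBalancedOptimum a b s u) :
    ∃ p, ∀ i ∈ s, 2 * a i * u i + b i = p := by
  rcases s.eq_empty_or_nonempty with rfl | ⟨k, hk⟩
  · exact ⟨0, by simp⟩
  · exact ⟨_, fun i hi => hu.marginal_eq hi hk⟩

/-- Otherwise every agent would receive a positive share. -/
theorem exists_mem_le_of_marginal_eq (hu : IsBalancedOptimum a b s u) (hs : s.Nonempty)
    (ha : ∀ i ∈ s, a i < 0) {p : ℝ} (hp : ∀ i ∈ s, 2 * a i * u i + b i = p) :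
    ∃ i ∈ s, b i ≤ p := by
  by_contra! hbp
  have hpos : ∀ i ∈ s, 0 < u i := fun i hi => by
    nlinarith [ha i hi, hp i hi, hbp i hi]
  exact (sum_pos hpos hs).ne' hu.sum_eq_zero

theorem neg (hu : IsBalancedOptimum a b s u) : IsBalancedOptimum a (-b) s (-u) where
  sum_eq_zero := by simp [hu.sum_eq_zero]
  welfare_le v hv := by
    have := hu.welfare_le (-v) (by simp [hv])
    simp only [Pi.neg_apply] at this ⊢
    convert this using 2 <;> ring

theorem exists_mem_ge_of_marginal_eq (hu : IsBalancedOptimum a b s u) (hs : s.Nonempty)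
    (ha : ∀ i ∈ s, a i < 0) {p : ℝ} (hp : ∀ i ∈ s, 2 * a i * u i + b i = p) :
    ∃ i ∈ s, p ≤ b i := by
  obtain ⟨i, hi, hle⟩ := hu.neg.exists_mem_le_of_marginal_eq hs ha (p := -p) fun i hi => by
    simp only [Pi.neg_apply]; linarith [hp i hi]
  exact ⟨i, hi, by simpa using hle⟩

theorem abs_apply_le {ahi blo bhi : ℝ} (hu : IsBalancedOptimum a b s u)
    (ha : ∀ i ∈ s, a i ≤ ahi) (hahi : ahi < 0) (hb : ∀ i ∈ s, blo ≤ b i ∧ b i ≤ bhi)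
    {i : ι} (hi : i ∈ s) :
    |u i| ≤ (bhi - blo) / (-2 * ahi) := by
  have hneg : ∀ i ∈ s, a i < 0 := fun i hi => (ha i hi).trans_lt hahi
  obtain ⟨p, hp⟩ := hu.exists_forall_marginal_eq
  obtain ⟨k, hk, hbk⟩ := hu.exists_mem_le_of_marginal_eq ⟨i, hi⟩ hneg hp
  obtain ⟨l, hl, hbl⟩ := hu.exists_mem_ge_of_marginal_eq ⟨i, hi⟩ hneg hp
  have hshare : |2 * a i * u i| ≤ bhi - blo := by
    rw [abs_le]
    constructor <;> linarith [hp i hi, hb i hi, hb k hk, hb l hl]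
  rw [le_div_iff₀ (by linarith), mul_comm]
  calc -2 * ahi * |u i| ≤ |2 * a i| * |u i| := by
        gcongr
        rw [abs_of_neg (by linarith [hneg i hi])]
        linarith [ha i hi]
    _ ≤ bhi - blo := by rwa [← abs_mul]

theorem card_mul_abs_sub_le [DecidableEq ι] {alo ahi : ℝ} {i₀ j : ι} (hi₀ : i₀ ∉ s)
    (hu : IsBalancedOptimum a b (insert i₀ s) u) (hw : IsBalancedOptimum a b s w)
    (ha : ∀ i ∈ s, alo ≤ a i ∧ a i ≤ ahi) (hahi : ahi < 0) (hj : j ∈ s) :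
    #s * |u j - w j| ≤ alo / ahi * |u i₀| := by
  obtain ⟨p, hp⟩ := hu.exists_forall_marginal_eq
  obtain ⟨q, hq⟩ := hw.exists_forall_marginal_eq
  have hdiff : ∀ i ∈ s, a i * (u i - w i) = (p - q) / 2 := fun i hi => by
    linarith [hp i (mem_insert_of_mem hi), hq i hi]
  have hsum : ∑ i ∈ s, (u i - w i) = -u i₀ := by
    have := hu.sum_eq_zero
    rw [sum_insert hi₀] at this
    rw [sum_sub_distrib, hw.sum_eq_zero]
    linarith
  simpa [hsum] using card_mul_abs_le_of_mul_eq ha hahi hdiff hj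

end IsBalancedOptimum

theorem removal_of_one_agent_perturbs_allocation_O_one_over_N_general
    (a b : ℕ → ℝ) (alo ahi blo bhi : ℝ)
    (ha : ∀ i, 1 ≤ i → alo ≤ a i ∧ a i ≤ ahi) (hahi : ahi < 0)
    (hb : ∀ i, 1 ≤ i → blo ≤ b i ∧ b i ≤ bhi)
    (U W : ℕ → ℕ → ℝ)
    (hUfeas : ∀ N, 2 ≤ N → ∑ j ∈ Finset.Icc 1 N, U N j = 0)
    (hUopt : ∀ N, 2 ≤ N → ∀ v : ℕ → ℝ, ∑ j ∈ Finset.Icc 1 N, v j = 0 →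
      ∑ j ∈ Finset.Icc 1 N, (a j * v j ^ 2 + b j * v j) ≤
        ∑ j ∈ Finset.Icc 1 N, (a j * U N j ^ 2 + b j * U N j))
    (hWfeas : ∀ N, 2 ≤ N → ∑ j ∈ Finset.Icc 2 N, W N j = 0)
    (hWopt : ∀ N, 2 ≤ N → ∀ v : ℕ → ℝ, ∑ j ∈ Finset.Icc 2 N, v j = 0 →
      ∑ j ∈ Finset.Icc 2 N, (a j * v j ^ 2 + b j * v j) ≤
        ∑ j ∈ Finset.Icc 2 N, (a j * W N j ^ 2 + b j * W N j)) :
    (∀ ε : ℝ, 0 < ε → ∃ N₀ : ℕ, ∀ N, N₀ ≤ N → ∀ j ∈ Finset.Icc 2 N,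
        |U N j - W N j| < ε) ∧
      ∃ C : ℝ, ∀ N, 2 ≤ N → ∀ j ∈ Finset.Icc 2 N,
        |U N j - W N j| ≤ C / N := by
  have hratio : 0 ≤ alo / ahi :=
    div_nonneg_of_nonpos ((ha 1 le_rfl).1.trans ((ha 1 le_rfl).2.trans hahi.le)) hahi.le
  set K := alo / ahi * ((bhi - blo) / (-2 * ahi))
  have hbound : ∀ N, 2 ≤ N → ∀ j ∈ Icc 2 N, |U N j - W N j| ≤ 2 * K / N := by
    intro N hN j hj
    have hIcc : insert 1 (Icc 2 N) = Icc 1 N := insert_Icc_add_one_left_eq_Icc (by omega)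
    have hU : IsBalancedOptimum a b (insert 1 (Icc 2 N)) (U N) :=
      hIcc ▸ ⟨hUfeas N hN, hUopt N hN⟩
    have hpos : ∀ i ∈ insert 1 (Icc 2 N), 1 ≤ i := by simp only [hIcc, mem_Icc]; omega
    have hremoval := hU.card_mul_abs_sub_le (by simp) ⟨hWfeas N hN, hWopt N hN⟩
      (fun i hi => ha i (hpos i (mem_insert_of_mem hi))) hahi hj
    have hU₁ := hU.abs_apply_le (fun i hi => (ha i (hpos i hi)).2) hahi
      (fun i hi => hb i (hpos i hi)) (mem_insert_self 1 _)
    have hcard : (N : ℝ) ≤ 2 * #(Icc 2 N) := by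
      rw [Nat.card_Icc]
      exact_mod_cast (by omega : N ≤ 2 * (N + 1 - 2))
    rw [le_div_iff₀ (by positivity)]
    calc |U N j - W N j| * N ≤ 2 * (#(Icc 2 N) * |U N j - W N j|) := by
          nlinarith [abs_nonneg (U N j - W N j)]
      _ ≤ 2 * (alo / ahi * |U N 1|) := by gcongr
      _ ≤ 2 * K := by gcongr; exact mul_le_mul_of_nonneg_left hU₁ hratio
  refine ⟨fun ε hε => ?_, 2 * K, hbound⟩
  obtain ⟨N₀, hN₀⟩ := eventually_atTop.1
    ((tendsto_const_div_atTop_nhds_zero_nat (2 * K)).eventually (gt_mem_nhds hε))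
  exact ⟨max 2 N₀, fun N hN j hj =>
    (hbound N (le_of_max_le_left hN) j hj).trans_lt (hN₀ N (le_of_max_le_right hN))⟩

/-- **Lemma 1.** For quadratic agents `Fᵢ(u) = aᵢu² + bᵢu` with coefficients uniformly
bounded (`a̲ ≤ aᵢ ≤ ā < 0`, `0 < b̲ ≤ bᵢ ≤ b̄`), if `U*(N)` is the maximizer of the
balanced social-welfare problem over agents `1,…,N` and `W*(N)` the maximizer of the
problem over agents `2,…,N`, then `max_{2 ≤ j ≤ N} |U*(N)ⱼ − W*(N)ⱼ| → 0` as `N → ∞`,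
and in fact this maximum is `O(1/N)`. -/
theorem removal_of_one_agent_perturbs_allocation_O_one_over_N
    (a b : ℕ → ℝ) (alo ahi blo bhi : ℝ)
    (ha : ∀ i, 1 ≤ i → alo ≤ a i ∧ a i ≤ ahi) (hahi : ahi < 0)
    (hb : ∀ i, 1 ≤ i → blo ≤ b i ∧ b i ≤ bhi) (hblo : 0 < blo)
    (U W : ℕ → ℕ → ℝ)
    (hUfeas : ∀ N, 2 ≤ N → ∑ j ∈ Finset.Icc 1 N, U N j = 0)
    (hUopt : ∀ N, 2 ≤ N → ∀ v : ℕ → ℝ, ∑ j ∈ Finset.Icc 1 N, v j = 0 →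
      ∑ j ∈ Finset.Icc 1 N, (a j * v j ^ 2 + b j * v j) ≤
        ∑ j ∈ Finset.Icc 1 N, (a j * U N j ^ 2 + b j * U N j))
    (hWfeas : ∀ N, 2 ≤ N → ∑ j ∈ Finset.Icc 2 N, W N j = 0)
    (hWopt : ∀ N, 2 ≤ N → ∀ v : ℕ → ℝ, ∑ j ∈ Finset.Icc 2 N, v j = 0 →
      ∑ j ∈ Finset.Icc 2 N, (a j * v j ^ 2 + b j * v j) ≤
        ∑ j ∈ Finset.Icc 2 N, (a j * W N j ^ 2 + b j * W N j)) :
    (∀ ε : ℝ, 0 < ε → ∃ N₀ : ℕ, ∀ N, N₀ ≤ N → ∀ j ∈ Finset.Icc 2 N,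
        |U N j - W N j| < ε) ∧
      ∃ C : ℝ, ∀ N, 2 ≤ N → ∀ j ∈ Finset.Icc 2 N,
        |U N j - W N j| ≤ C / N :=
  removal_of_one_agent_perturbs_allocation_O_one_over_N_general a b alo ahi blo bhi ha hahi hb U W
    hUfeas hUopt hWfeas hWopt
end

section
/- Let a : ℕ → ℝ and b : ℕ → ℝ be sequences with a̲ ≤ aᵢ ≤ ā < 0 and 0 < b̲ ≤ bᵢ ≤ b̄ for all i ≥ 1. For each N ≥ 2 let F_total(N) be the optimal value of: maximize Σ_{i=1}^N (aᵢuᵢ² + bᵢuᵢ) subject to Σ_{i=1}^N uᵢ = 0, and for each i ≤ N let Hᵢ(N) be the optimal value of the analogous problem over the agents j ≤ N with j ≠ i, subject to Σ_{j≠i} u_j = 0. Assume that for every N: F_total(N) > 0, Hᵢ(N) > 0 for all i ≤ N, and (N−1)·max_{i≤N} Hᵢ(N) ≤ Σ_{i=1}^N Hᵢ(N). Then lim_{N→∞} (N−1)·F_total(N)/Σ_{i=1}^N Hᵢ(N) = 1 and lim_{N→∞} F_total(N)/max_{i≤N} Hᵢ(N) = 1; consequently any sequence c^N with (N−1)·F_total(N)/ΣᵢHᵢ(N)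 ≤ c^N ≤ F_total(N)/max_i Hᵢ(N) satisfies lim_{N→∞} c^N = 1. -/
/-!
At the optimum `w` of the balanced problem every marginal utility `2 aⱼ wⱼ + bⱼ` equals a
common multiplier `μ`, and completing the square around `w` gives `F_total = ∑ⱼ (-aⱼ) wⱼ²`.
The same multiplier bounds `Hᵢ` above by `F_total - (-aᵢ) wᵢ²`; spreading `wᵢ` evenly over the
other agents shows that `Hᵢ` falls short of this by at most `-alo wᵢ² / (N - 1)`. Summing over
`i`, with `∑ᵢ wᵢ² ≤ F_total / (-ahi)`, gives `∑ᵢ Hᵢ = (N - 1) F_total (1 - O(N⁻²))`. Finally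
`Hmax` lies between the average of the `Hᵢ` and `F_total`, so both endpoints of the scaling
interval tend to `1`, and so does everything squeezed between them.
-/

open Finset Filter Topology

section BalancedWelfare

variable {ι : Type*} {a b : ι → ℝ} {s : Finset ι}

def balancedWelfareValues (a b : ι → ℝ) (s : Finset ι) : Set ℝ :=
  {v | ∃ u : ι → ℝ, ∑ j ∈ s, u j = 0 ∧ v = ∑ j ∈ s, (a j * u j ^ 2 + b j * u j)}

theorem exists_balanced_stationary_point (ha : ∀ j ∈ s, a j < 0) :
    ∃ (μ : ℝ) (w : ι → ℝ), ∑ j ∈ s, w j = 0 ∧ ∀ j ∈ s, b j = μ - 2 * a j * w j := by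
  rcases s.eq_empty_or_nonempty with rfl | hs
  · exact ⟨0, 0, by simp, by simp⟩
  have hS : ∑ j ∈ s, (a j)⁻¹ ≠ 0 := (sum_neg (fun j hj => inv_lt_zero.2 (ha j hj)) hs).ne
  set μ := (∑ j ∈ s, b j / a j) / ∑ j ∈ s, (a j)⁻¹ with hμ
  refine ⟨μ, fun j => (μ * (a j)⁻¹ - b j / a j) / 2, ?_, fun j hj => ?_⟩
  · rw [← sum_div, sum_sub_distrib, ← mul_sum, hμ, div_mul_cancel₀ _ hS, sub_self, zero_div]
  · have := (ha j hj).ne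
    field_simp
    ring

theorem sum_quadratic_eq_of_stationary {μ : ℝ} {w : ι → ℝ}
    (hw : ∀ j ∈ s, b j = μ - 2 * a j * w j) (u : ι → ℝ) :
    ∑ j ∈ s, (a j * u j ^ 2 + b j * u j)
      = μ * ∑ j ∈ s, u j + ∑ j ∈ s, (a j * (u j - w j) ^ 2 - a j * w j ^ 2) := by
  rw [mul_sum, ← sum_add_distrib]
  refine sum_congr rfl fun j hj => ?_
  rw [hw j hj]
  ring

theorem sum_quadratic_le_of_stationary {μ : ℝ} {w u : ι → ℝ} (ha : ∀ j ∈ s, a j ≤ 0)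
    (hw : ∀ j ∈ s, b j = μ - 2 * a j * w j) (hu : ∑ j ∈ s, u j = 0) :
    ∑ j ∈ s, (a j * u j ^ 2 + b j * u j) ≤ ∑ j ∈ s, -(a j * w j ^ 2) := by
  rw [sum_quadratic_eq_of_stationary hw, hu, mul_zero, zero_add]
  exact sum_le_sum fun j hj => by
    linarith [mul_nonpos_of_nonpos_of_nonneg (ha j hj) (sq_nonneg (u j - w j))]

theorem isGreatest_balancedWelfareValues {μ : ℝ} {w : ι → ℝ} (ha : ∀ j ∈ s, a j ≤ 0)
    (hw : ∀ j ∈ s, b j = μ - 2 * a j * w j) (hw₀ : ∑ j ∈ s, w j = 0) :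
    IsGreatest (balancedWelfareValues a b s) (∑ j ∈ s, -(a j * w j ^ 2)) := by
  refine ⟨⟨w, hw₀, ?_⟩, fun v ⟨u, hu, hv⟩ => hv ▸ sum_quadratic_le_of_stationary ha hw hu⟩
  rw [sum_quadratic_eq_of_stationary hw, hw₀]
  simp

theorem exists_stationary_point_of_isGreatest {F : ℝ} (ha : ∀ j ∈ s, a j < 0)
    (hF : IsGreatest (balancedWelfareValues a b s) F) :
    ∃ (μ : ℝ) (w : ι → ℝ), ∑ j ∈ s, w j = 0 ∧ (∀ j ∈ s, b j = μ - 2 * a j * w j) ∧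
      F = ∑ j ∈ s, -(a j * w j ^ 2) := by
  obtain ⟨μ, w, hw₀, hw⟩ := exists_balanced_stationary_point (b := b) ha
  exact ⟨μ, w, hw₀, hw,
    hF.unique (isGreatest_balancedWelfareValues (fun j hj => (ha j hj).le) hw hw₀)⟩

variable [DecidableEq ι]

theorem le_of_mem_balancedWelfareValues_erase {μ v : ℝ} {w : ι → ℝ} {i : ι}
    (ha : ∀ j ∈ s, a j ≤ 0) (hw : ∀ j ∈ s, b j = μ - 2 * a j * w j) (hi : i ∈ s)
    (hv : v ∈ balancedWelfareValues a b (s.erase i)) :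
    v ≤ ∑ j ∈ s, -(a j * w j ^ 2) + a i * w i ^ 2 := by
  obtain ⟨u, hu, rfl⟩ := hv
  have := sum_quadratic_le_of_stationary (fun j hj => ha j (mem_of_mem_erase hj))
    (fun j hj => hw j (mem_of_mem_erase hj)) hu
  rw [← add_sum_erase s _ hi]
  linarith

-- The witness spreads agent `i`'s optimal share `w i` evenly over the remaining agents.
theorem mem_balancedWelfareValues_erase {μ : ℝ} {w : ι → ℝ} {i : ι}
    (hw : ∀ j ∈ s, b j = μ - 2 * a j * w j) (hw₀ : ∑ j ∈ s, w j = 0) (hi : i ∈ s)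
    (hs : 2 ≤ #s) :
    ∑ j ∈ s, -(a j * w j ^ 2) + a i * w i ^ 2 + (w i / (#s - 1)) ^ 2 * ∑ j ∈ s.erase i, a j
      ∈ balancedWelfareValues a b (s.erase i) := by
  have hcard : ((#(s.erase i) : ℕ) : ℝ) = #s - 1 := by
    rw [card_erase_of_mem hi, Nat.cast_sub (by omega), Nat.cast_one]
  have hpos : (0 : ℝ) < #s - 1 := sub_pos.2 (Nat.one_lt_cast.2 hs)
  have hrest : ∑ j ∈ s.erase i, w j = -w i := by
    linarith [add_sum_erase s w hi]
  set t := w i / (#s - 1)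
  have ht : (#s - 1) * t = w i := mul_div_cancel₀ _ hpos.ne'
  have hu₀ : ∑ j ∈ s.erase i, (w j + t) = 0 := by
    rw [sum_add_distrib, sum_const, nsmul_eq_mul, hcard, hrest, ht, neg_add_cancel]
  refine ⟨fun j => w j + t, hu₀, ?_⟩
  rw [sum_quadratic_eq_of_stationary (fun j hj => hw j (mem_of_mem_erase hj)), hu₀,
    ← add_sum_erase s _ hi]
  simp only [add_sub_cancel_left, sum_sub_distrib, ← sum_mul, sum_neg_distrib]
  ring

variable {F : ℝ} {H : ι → ℝ}

theorem le_of_mem_balancedWelfareValues_erase_of_isGreatest {v : ℝ} {i : ι}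
    (ha : ∀ j ∈ s, a j < 0) (hF : IsGreatest (balancedWelfareValues a b s) F) (hi : i ∈ s)
    (hv : v ∈ balancedWelfareValues a b (s.erase i)) : v ≤ F := by
  obtain ⟨μ, w, -, hw, rfl⟩ := exists_stationary_point_of_isGreatest ha hF
  have := le_of_mem_balancedWelfareValues_erase (fun j hj => (ha j hj).le) hw hi hv
  linarith [mul_nonpos_of_nonpos_of_nonneg (ha i hi).le (sq_nonneg (w i))]

theorem sum_le_card_sub_one_mul_of_isGreatest (ha : ∀ j ∈ s, a j < 0)
    (hF : IsGreatest (balancedWelfareValues a b s) F)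
    (hH : ∀ i ∈ s, H i ∈ balancedWelfareValues a b (s.erase i)) :
    ∑ i ∈ s, H i ≤ (#s - 1) * F := by
  obtain ⟨μ, w, -, hw, rfl⟩ := exists_stationary_point_of_isGreatest ha hF
  calc ∑ i ∈ s, H i ≤ ∑ i ∈ s, (∑ j ∈ s, -(a j * w j ^ 2) + a i * w i ^ 2) :=
        sum_le_sum fun i hi =>
          le_of_mem_balancedWelfareValues_erase (fun j hj => (ha j hj).le) hw hi (hH i hi)
    _ = (#s - 1) * ∑ j ∈ s, -(a j * w j ^ 2) := by
        rw [sum_add_distrib, sum_const, nsmul_eq_mul, ← neg_neg (∑ i ∈ s, a i * w i ^ 2),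
          ← sum_neg_distrib]
        ring

theorem card_sub_one_mul_sub_le_sum_of_isGreatest {alo ahi : ℝ} (hs : 2 ≤ #s)
    (ha : ∀ j ∈ s, alo ≤ a j ∧ a j ≤ ahi) (hahi : ahi < 0)
    (hF : IsGreatest (balancedWelfareValues a b s) F)
    (hH : ∀ i ∈ s, H i ∈ upperBounds (balancedWelfareValues a b (s.erase i))) :
    (#s - 1) * F - alo / ahi * F / (#s - 1) ≤ ∑ i ∈ s, H i := by
  have hneg : ∀ j ∈ s, a j < 0 := fun j hj => (ha j hj).2.trans_lt hahi
  obtain ⟨μ, w, hw₀, hw, rfl⟩ := exists_stationary_point_of_isGreatest hneg hF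
  set F := ∑ j ∈ s, -(a j * w j ^ 2)
  have hpos : (0 : ℝ) < #s - 1 := sub_pos.2 (Nat.one_lt_cast.2 hs)
  have hH' : ∀ i ∈ s, F + a i * w i ^ 2 + alo * w i ^ 2 / (#s - 1) ≤ H i := by
    intro i hi
    refine le_trans ?_ (hH i hi (mem_balancedWelfareValues_erase hw hw₀ hi hs))
    have hsum : (#s - 1) * alo ≤ ∑ j ∈ s.erase i, a j := by
      have := card_nsmul_le_sum (s.erase i) a alo fun j hj => (ha j (mem_of_mem_erase hj)).1
      rwa [nsmul_eq_mul, card_erase_of_mem hi, Nat.cast_sub (by omega), Nat.cast_one] at this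
    have := mul_le_mul_of_nonneg_left hsum (sq_nonneg (w i / (#s - 1)))
    field_simp at this ⊢
    linarith
  have hQ : -F ≤ ahi * ∑ j ∈ s, w j ^ 2 := by
    rw [mul_sum, ← sum_neg_distrib]
    exact sum_le_sum fun j hj => by nlinarith [(ha j hj).2, sq_nonneg (w j)]
  have hQ' : -(alo / ahi * F) ≤ alo * ∑ j ∈ s, w j ^ 2 := by
    obtain ⟨j, hj⟩ := card_pos.1 (by omega : 0 < #s)
    have hr : 0 ≤ alo / ahi := div_nonneg_of_nonpos ((ha j hj).1.trans (hneg j hj).le) hahi.le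
    calc -(alo / ahi * F) = alo / ahi * -F := by ring
      _ ≤ alo / ahi * (ahi * ∑ j ∈ s, w j ^ 2) := mul_le_mul_of_nonneg_left hQ hr
      _ = alo * ∑ j ∈ s, w j ^ 2 := by rw [← mul_assoc, div_mul_cancel₀ _ hahi.ne]
  calc (#s - 1) * F - alo / ahi * F / (#s - 1)
      ≤ (#s - 1) * F + alo * (∑ j ∈ s, w j ^ 2) / (#s - 1) := by
        rw [sub_eq_add_neg, ← neg_div]
        gcongr
    _ = ∑ i ∈ s, (F + a i * w i ^ 2 + alo * w i ^ 2 / (#s - 1)) := by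
        rw [sum_add_distrib, sum_add_distrib, sum_const, nsmul_eq_mul, ← sum_div, ← mul_sum,
          ← neg_neg (∑ i ∈ s, a i * w i ^ 2), ← sum_neg_distrib]
        ring
    _ ≤ ∑ i ∈ s, H i := sum_le_sum hH'

theorem sum_div_mem_Icc_of_isGreatest {alo ahi : ℝ} (hs : 2 ≤ #s)
    (ha : ∀ j ∈ s, alo ≤ a j ∧ a j ≤ ahi) (hahi : ahi < 0)
    (hF : IsGreatest (balancedWelfareValues a b s) F) (hF₀ : 0 < F)
    (hH : ∀ i ∈ s, IsGreatest (balancedWelfareValues a b (s.erase i)) (H i)) :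
    (∑ i ∈ s, H i) / ((#s - 1) * F) ∈ Set.Icc (1 - alo / ahi / (#s - 1) ^ 2) 1 := by
  have hneg : ∀ j ∈ s, a j < 0 := fun j hj => (ha j hj).2.trans_lt hahi
  have hpos : (0 : ℝ) < #s - 1 := sub_pos.2 (Nat.one_lt_cast.2 hs)
  have hlow := card_sub_one_mul_sub_le_sum_of_isGreatest hs ha hahi hF fun i hi => (hH i hi).2
  have hupp := sum_le_card_sub_one_mul_of_isGreatest hneg hF fun i hi => (hH i hi).1
  constructor
  · rw [le_div_iff₀ (by positivity)]
    refine le_trans (le_of_eq ?_) hlow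
    field_simp [hpos.ne']
  · exact div_le_one_of_le₀ hupp (by positivity)

theorem max_div_mem_Icc_of_isGreatest {alo ahi Hm : ℝ} (hs : 2 ≤ #s)
    (ha : ∀ j ∈ s, alo ≤ a j ∧ a j ≤ ahi) (hahi : ahi < 0)
    (hF : IsGreatest (balancedWelfareValues a b s) F) (hF₀ : 0 < F)
    (hH : ∀ i ∈ s, IsGreatest (balancedWelfareValues a b (s.erase i)) (H i))
    (hHm : IsGreatest {v | ∃ i ∈ s, v = H i} Hm) :
    Hm / F ∈ Set.Icc ((1 - alo / ahi / (#s - 1) ^ 2) * (1 - 1 / #s)) 1 := by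
  have hneg : ∀ j ∈ s, a j < 0 := fun j hj => (ha j hj).2.trans_lt hahi
  have hn : (0 : ℝ) < #s := Nat.cast_pos.2 (by omega)
  have hsum : ∑ i ∈ s, H i ≤ #s * Hm := by
    simpa using sum_le_sum fun i hi => hHm.2 ⟨i, hi, rfl⟩
  obtain ⟨i, hi, rfl⟩ := hHm.1
  have hp := (sum_div_mem_Icc_of_isGreatest hs ha hahi hF hF₀ hH).1
  constructor
  · rw [le_div_iff₀ hF₀]
    have hpos : (0 : ℝ) < (#s - 1) * F := mul_pos (sub_pos.2 (Nat.one_lt_cast.2 hs)) hF₀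
    calc (1 - alo / ahi / (#s - 1) ^ 2) * (1 - 1 / #s) * F
        = (1 - alo / ahi / (#s - 1) ^ 2) * ((#s - 1) * F) / #s := by field_simp
      _ ≤ (∑ i ∈ s, H i) / #s := by gcongr; exact (le_div_iff₀ hpos).1 hp
      _ ≤ H i := by rw [div_le_iff₀ hn]; linarith
  · exact div_le_one_of_le₀
      (le_of_mem_balancedWelfareValues_erase_of_isGreatest hneg hF hi (hH i hi).1) hF₀.le

end BalancedWelfare

theorem tendsto_inv_of_mem_Icc {α : Type*} {l : Filter α} {f g : α → ℝ}
    (hg : Tendsto g l (𝓝 1)) (hf : ∀ᶠ x in l, f x ∈ Set.Icc (g x) 1) :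
    Tendsto (fun x => (f x)⁻¹) l (𝓝 1) := by
  have := tendsto_of_tendsto_of_tendsto_of_le_of_le' hg tendsto_const_nhds
    (hf.mono fun _ h => h.1) (hf.mono fun _ h => h.2)
  simpa using this.inv₀ one_ne_zero

theorem tendsto_one_sub_div_natCast_sub_one_sq (r : ℝ) :
    Tendsto (fun N : ℕ => 1 - r / ((N : ℝ) - 1) ^ 2) atTop (𝓝 1) := by
  have h : Tendsto (fun N : ℕ => ((N : ℝ) - 1) ^ 2) atTop atTop :=
    (tendsto_pow_atTop two_ne_zero).comp
      (tendsto_atTop_add_const_right _ (-1) tendsto_natCast_atTop_atTop)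
  simpa using tendsto_const_nhds.sub (tendsto_const_nhds.div_atTop h)

theorem scaled_vcg_factor_tendsto_one_general
    (a b : ℕ → ℝ) (alo ahi : ℝ)
    (ha : ∀ i, 1 ≤ i → alo ≤ a i ∧ a i ≤ ahi) (hahi : ahi < 0)
    (Ftot : ℕ → ℝ) (H : ℕ → ℕ → ℝ) (Hmax : ℕ → ℝ)
    (hFtot : ∀ N : ℕ, 2 ≤ N → IsGreatest
      {v : ℝ | ∃ u : ℕ → ℝ, ∑ j ∈ Finset.Icc 1 N, u j = 0 ∧
        v = ∑ j ∈ Finset.Icc 1 N, (a j * u j ^ 2 + b j * u j)} (Ftot N))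
    (hH : ∀ N : ℕ, 2 ≤ N → ∀ i ∈ Finset.Icc 1 N, IsGreatest
      {v : ℝ | ∃ u : ℕ → ℝ, ∑ j ∈ (Finset.Icc 1 N).erase i, u j = 0 ∧
        v = ∑ j ∈ (Finset.Icc 1 N).erase i, (a j * u j ^ 2 + b j * u j)} (H N i))
    (hHmax : ∀ N : ℕ, 2 ≤ N → IsGreatest
      {v : ℝ | ∃ i ∈ Finset.Icc 1 N, v = H N i} (Hmax N))
    (hFpos : ∀ N : ℕ, 2 ≤ N → 0 < Ftot N) :
    Tendsto (fun N : ℕ => ((N : ℝ) - 1) * Ftot N / ∑ i ∈ Finset.Icc 1 N, H N i)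
        atTop (nhds 1) ∧
      Tendsto (fun N : ℕ => Ftot N / Hmax N) atTop (nhds 1) ∧
      ∀ c : ℕ → ℝ,
        (∀ N : ℕ, 2 ≤ N →
          ((N : ℝ) - 1) * Ftot N / (∑ i ∈ Finset.Icc 1 N, H N i) ≤ c N ∧
            c N ≤ Ftot N / Hmax N) →
        Tendsto c atTop (nhds 1) := by
  have hcard (N : ℕ) : (#(Icc 1 N) : ℝ) = N := by simp
  have hcard₂ (N : ℕ) (hN : 2 ≤ N) : 2 ≤ #(Icc 1 N) := by simpa using hN
  have ha' (N : ℕ) : ∀ j ∈ Icc 1 N, alo ≤ a j ∧ a j ≤ ahi := fun j hj => ha j (mem_Icc.1 hj).1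
  have hlow := tendsto_one_sub_div_natCast_sub_one_sq (alo / ahi)
  have hlow' :=
    hlow.mul ((tendsto_const_nhds (x := (1 : ℝ))).sub tendsto_one_div_atTop_nhds_zero_nat)
  rw [sub_zero, mul_one] at hlow'
  have hp : ∀ᶠ N : ℕ in atTop, (∑ i ∈ Icc 1 N, H N i) / ((N - 1) * Ftot N)
      ∈ Set.Icc (1 - alo / ahi / ((N : ℝ) - 1) ^ 2) 1 :=
    eventually_atTop.2 ⟨2, fun N hN => by
      simpa only [hcard] using sum_div_mem_Icc_of_isGreatest (hcard₂ N hN) (ha' N) hahi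
        (hFtot N hN) (hFpos N hN) (hH N hN)⟩
  have hq : ∀ᶠ N : ℕ in atTop, Hmax N / Ftot N
      ∈ Set.Icc ((1 - alo / ahi / ((N : ℝ) - 1) ^ 2) * (1 - 1 / N)) 1 :=
    eventually_atTop.2 ⟨2, fun N hN => by
      simpa only [hcard] using max_div_mem_Icc_of_isGreatest (hcard₂ N hN) (ha' N) hahi
        (hFtot N hN) (hFpos N hN) (hH N hN) (hHmax N hN)⟩
  have hx :
      Tendsto (fun N : ℕ => ((N : ℝ) - 1) * Ftot N / ∑ i ∈ Icc 1 N, H N i) atTop (𝓝 1) := by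
    simpa only [inv_div] using tendsto_inv_of_mem_Icc hlow hp
  have hy : Tendsto (fun N : ℕ => Ftot N / Hmax N) atTop (𝓝 1) := by
    simpa only [inv_div] using tendsto_inv_of_mem_Icc hlow' hq
  refine ⟨hx, hy, fun c hc => tendsto_of_tendsto_of_tendsto_of_le_of_le' hx hy ?_ ?_⟩
  · exact eventually_atTop.2 ⟨2, fun N hN => (hc N hN).1⟩
  · exact eventually_atTop.2 ⟨2, fun N hN => (hc N hN).2⟩

/-- **Theorem 2, part 1.** For quadratic agents with uniformly bounded coefficients,
if `F_total(N)` is the optimal balanced social welfare over agents `1,…,N` and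
`Hᵢ(N)` the optimal value with agent `i` excluded, and `F_total(N) > 0`, `Hᵢ(N) > 0`,
and the Market Power Balance condition hold for every `N`, then both endpoints
`(N−1)·F_total(N)/ΣᵢHᵢ(N)` and `F_total(N)/max_i Hᵢ(N)` of the scaling interval
converge to `1`; hence any choice `c^N` in that interval converges to `1`. -/
theorem scaled_vcg_factor_tendsto_one
    (a b : ℕ → ℝ) (alo ahi blo bhi : ℝ)
    (ha : ∀ i, 1 ≤ i → alo ≤ a i ∧ a i ≤ ahi) (hahi : ahi < 0)
    (hb : ∀ i, 1 ≤ i → blo ≤ b i ∧ b i ≤ bhi) (hblo : 0 < blo)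
    (Ftot : ℕ → ℝ) (H : ℕ → ℕ → ℝ) (Hmax : ℕ → ℝ)
    (hFtot : ∀ N : ℕ, 2 ≤ N → IsGreatest
      {v : ℝ | ∃ u : ℕ → ℝ, ∑ j ∈ Finset.Icc 1 N, u j = 0 ∧
        v = ∑ j ∈ Finset.Icc 1 N, (a j * u j ^ 2 + b j * u j)} (Ftot N))
    (hH : ∀ N : ℕ, 2 ≤ N → ∀ i ∈ Finset.Icc 1 N, IsGreatest
      {v : ℝ | ∃ u : ℕ → ℝ, ∑ j ∈ (Finset.Icc 1 N).erase i, u j = 0 ∧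
        v = ∑ j ∈ (Finset.Icc 1 N).erase i, (a j * u j ^ 2 + b j * u j)} (H N i))
    (hHmax : ∀ N : ℕ, 2 ≤ N → IsGreatest
      {v : ℝ | ∃ i ∈ Finset.Icc 1 N, v = H N i} (Hmax N))
    (hFpos : ∀ N : ℕ, 2 ≤ N → 0 < Ftot N)
    (hHpos : ∀ N : ℕ, 2 ≤ N → ∀ i ∈ Finset.Icc 1 N, 0 < H N i)
    (hMPB : ∀ N : ℕ, 2 ≤ N → ((N : ℝ) - 1) * Hmax N ≤ ∑ i ∈ Finset.Icc 1 N, H N i) :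
    Tendsto (fun N : ℕ => ((N : ℝ) - 1) * Ftot N / ∑ i ∈ Finset.Icc 1 N, H N i)
        atTop (nhds 1) ∧
      Tendsto (fun N : ℕ => Ftot N / Hmax N) atTop (nhds 1) ∧
      ∀ c : ℕ → ℝ,
        (∀ N : ℕ, 2 ≤ N →
          ((N : ℝ) - 1) * Ftot N / (∑ i ∈ Finset.Icc 1 N, H N i) ≤ c N ∧
            c N ≤ Ftot N / Hmax N) →
        Tendsto c atTop (nhds 1) :=
  scaled_vcg_factor_tendsto_one_general a b alo ahi ha hahi Ftot H Hmax hFtot hH hHmax hFpos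
end

section
/- Let a : ℕ → ℝ and b : ℕ → ℝ be sequences with a̲ ≤ aᵢ ≤ ā < 0 and 0 < b̲ ≤ bᵢ ≤ b̄ for all i ≥ 1. For each N ≥ 2 put γ(N) := (Σ_{i=1}^N 1/aᵢ)⁻¹, λ*(N) := γ(N)·Σ_{i=1}^N bᵢ/aᵢ, and u₁*(N) := (λ*(N) − b₁)/(2a₁). Let U*(N) ∈ ℝ^N be the unique maximizer of Σ_{i=1}^N (aᵢuᵢ² + bᵢuᵢ) subject to Σ_{i=1}^N uᵢ = 0, let W*(N) ∈ ℝ^{N−1} (indexed by 2,…,N) be the unique maximizer of the problem over agents 2,…,N subject to Σ_{i=2}^N uᵢ = 0, and define the VCG payment of agent 1 by p₁(N) := Σ_{j=2}^N (aⱼ·W*(N)ⱼ² + bⱼ·W*(N)ⱼ) − Σ_{j=2}^N (aⱼ·U*(N)ⱼ² + bⱼ·U*(N)ⱼ). Then lim_{N→∞} (λ*(N)·u₁*(N) − p₁(N)) = 0. -/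
/-!
The welfare is strictly concave, so both constrained optima are the stationary points: at the price
`μ` agent `i` demands `rᵢ(μ) = (μ - bᵢ) / (2aᵢ)`, and a group of agents clears the market at the
shadow price `(∑ bᵢ/aᵢ) / (∑ 1/aᵢ)`, a weighted mean of their `bᵢ`. Since
`aᵢ rᵢ(μ)² + bᵢ rᵢ(μ) = (μ² - bᵢ²) / (4aᵢ)`, the VCG payment of agent `1` is `(μ'² - λ²) A' / 4`,
where `λ` and `μ'` are the shadow prices with and without agent `1` and `A' = ∑_{j ≥ 2} 1/aⱼ`.
Clearing the market gives `u₁ = (μ' - λ) A' / 2`, so `λ u₁ - p₁ = -u₁² / A'` exactly. The demand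
`u₁` stays bounded while `|A'|` grows linearly in `N`.
-/

open Finset Filter

noncomputable section QuadraticWelfare

variable {ι : Type*} (a b : ι → ℝ)

def welfare (s : Finset ι) (v : ι → ℝ) : ℝ := ∑ i ∈ s, (a i * v i ^ 2 + b i * v i)

def shadowPrice (s : Finset ι) : ℝ := (∑ i ∈ s, 1 / a i)⁻¹ * ∑ i ∈ s, b i / a i

def response (μ : ℝ) (i : ι) : ℝ := (μ - b i) / (2 * a i)

def lagrangePayment (s : Finset ι) (i : ι) : ℝ :=
  shadowPrice a b s * response a b (shadowPrice a b s) i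

/-- Here `t` is the set of the agents other than `i`. -/
def vcgPayment [DecidableEq ι] (t : Finset ι) (i : ι) : ℝ :=
  welfare a b t (response a b (shadowPrice a b t)) -
    welfare a b t (response a b (shadowPrice a b (insert i t)))

variable {a b}

theorem welfare_eq_of_stationary {s : Finset ι} {u : ι → ℝ} {μ : ℝ}
    (hu : ∀ i ∈ s, 2 * a i * u i + b i = μ) (v : ι → ℝ) :
    welfare a b s v = welfare a b s u + ∑ i ∈ s, a i * (v i - u i) ^ 2 +
      μ * (∑ i ∈ s, v i - ∑ i ∈ s, u i) := by
  simp only [welfare, mul_sub, Finset.mul_sum, ← Finset.sum_add_distrib, ← Finset.sum_sub_distrib]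
  refine Finset.sum_congr rfl fun i hi => ?_
  rw [← hu i hi]
  ring

theorem eqOn_of_welfare_le {s : Finset ι} {u v : ι → ℝ} {μ : ℝ} (ha : ∀ i ∈ s, a i < 0)
    (hu : ∀ i ∈ s, 2 * a i * u i + b i = μ) (hsum : ∑ i ∈ s, v i = ∑ i ∈ s, u i)
    (hle : welfare a b s u ≤ welfare a b s v) : Set.EqOn v u s := by
  have hgap := welfare_eq_of_stationary hu v
  rw [hsum, sub_self, mul_zero, add_zero] at hgap
  have hterm : ∀ i ∈ s, a i * (v i - u i) ^ 2 ≤ 0 := fun i hi =>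
    mul_nonpos_of_nonpos_of_nonneg (ha i hi).le (sq_nonneg _)
  have hzero := (Finset.sum_eq_zero_iff_of_nonpos hterm).1
    (le_antisymm (Finset.sum_nonpos hterm) (by linarith))
  intro i hi
  simpa [(ha i hi).ne, sub_eq_zero] using hzero i hi

theorem two_mul_mul_response_add {i : ι} (ha : a i ≠ 0) (μ : ℝ) :
    2 * a i * response a b μ i + b i = μ := by
  rw [response]
  field_simp
  ring

theorem sum_response (s : Finset ι) (μ : ℝ) :
    ∑ i ∈ s, response a b μ i = (μ * ∑ i ∈ s, 1 / a i - ∑ i ∈ s, b i / a i) / 2 := by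
  rw [Finset.mul_sum, ← Finset.sum_sub_distrib, Finset.sum_div]
  refine Finset.sum_congr rfl fun i _ => ?_
  rw [response, mul_one_div, ← sub_div, div_div, mul_comm (a i)]

theorem shadowPrice_mul_sum {s : Finset ι} (hs : ∑ i ∈ s, 1 / a i ≠ 0) :
    shadowPrice a b s * ∑ i ∈ s, 1 / a i = ∑ i ∈ s, b i / a i := by
  rw [shadowPrice, mul_comm, ← mul_assoc, mul_inv_cancel₀ hs, one_mul]

theorem sum_response_shadowPrice {s : Finset ι} (hs : ∑ i ∈ s, 1 / a i ≠ 0) :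
    ∑ i ∈ s, response a b (shadowPrice a b s) i = 0 := by
  rw [sum_response, shadowPrice_mul_sum hs, sub_self, zero_div]

theorem welfare_response {s : Finset ι} (ha : ∀ i ∈ s, a i ≠ 0) (μ : ℝ) :
    welfare a b s (response a b μ) = (μ ^ 2 * ∑ i ∈ s, 1 / a i - ∑ i ∈ s, b i ^ 2 / a i) / 4 := by
  rw [Finset.mul_sum, ← Finset.sum_sub_distrib, Finset.sum_div, welfare]
  refine Finset.sum_congr rfl fun i hi => ?_
  have := ha i hi
  rw [response]
  field_simp
  ring

theorem lagrangePayment_sub_vcgPayment [DecidableEq ι] {t : Finset ι} {i : ι} (hi : i ∉ t)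
    (ha : ∀ j ∈ t, a j ≠ 0) (hA : ∑ j ∈ insert i t, 1 / a j ≠ 0) (hA' : ∑ j ∈ t, 1 / a j ≠ 0) :
    lagrangePayment a b (insert i t) i - vcgPayment a b t i =
      -response a b (shadowPrice a b (insert i t)) i ^ 2 / ∑ j ∈ t, 1 / a j := by
  set lam := shadowPrice a b (insert i t)
  set μ := shadowPrice a b t
  set A' := ∑ j ∈ t, 1 / a j
  have hμ : μ * A' = ∑ j ∈ t, b j / a j := shadowPrice_mul_sum hA'
  have hclear : response a b lam i = (μ - lam) * A' / 2 := by
    have h := sum_response_shadowPrice (b := b) hA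
    rw [Finset.sum_insert hi, sum_response, ← hμ] at h
    linear_combination h
  rw [lagrangePayment, vcgPayment, welfare_response ha, welfare_response ha, hclear]
  field_simp
  ring

theorem eqOn_response_shadowPrice {s : Finset ι} (hs : s.Nonempty) (ha : ∀ i ∈ s, a i < 0)
    {U : ι → ℝ} (hU : ∑ i ∈ s, U i = 0)
    (hUopt : ∀ v : ι → ℝ, ∑ i ∈ s, v i = 0 → welfare a b s v ≤ welfare a b s U) :
    Set.EqOn U (response a b (shadowPrice a b s)) s := by
  have hA : ∑ i ∈ s, 1 / a i ≠ 0 :=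
    (Finset.sum_neg (fun i hi => one_div_neg.2 (ha i hi)) hs).ne
  have hclear := sum_response_shadowPrice (b := b) hA
  refine eqOn_of_welfare_le ha (fun i hi => two_mul_mul_response_add (ha i hi).ne _) ?_
    (hUopt _ hclear)
  rw [hU, hclear]

theorem shadowPrice_mem_Icc {s : Finset ι} {blo bhi : ℝ} (hs : s.Nonempty)
    (ha : ∀ i ∈ s, a i < 0) (hb : ∀ i ∈ s, b i ∈ Set.Icc blo bhi) :
    shadowPrice a b s ∈ Set.Icc blo bhi := by
  have hA : ∑ i ∈ s, 1 / a i < 0 := Finset.sum_neg (fun i hi => one_div_neg.2 (ha i hi)) hs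
  have hlo : ∑ i ∈ s, b i / a i ≤ blo * ∑ i ∈ s, 1 / a i := by
    rw [Finset.mul_sum]
    refine Finset.sum_le_sum fun i hi => ?_
    rw [mul_one_div]
    exact div_le_div_of_nonpos_of_le (ha i hi).le (hb i hi).1
  have hhi : bhi * ∑ i ∈ s, 1 / a i ≤ ∑ i ∈ s, b i / a i := by
    rw [Finset.mul_sum]
    refine Finset.sum_le_sum fun i hi => ?_
    rw [mul_one_div]
    exact div_le_div_of_nonpos_of_le (ha i hi).le (hb i hi).2
  rw [shadowPrice, inv_mul_eq_div]
  exact ⟨(le_div_iff_of_neg hA).2 hlo, (div_le_iff_of_neg hA).2 hhi⟩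

theorem abs_response_le {μ blo bhi ahi : ℝ} {i : ι} (hμ : μ ∈ Set.Icc blo bhi)
    (hb : b i ∈ Set.Icc blo bhi) (ha : a i ≤ ahi) (hahi : ahi < 0) :
    |response a b μ i| ≤ (bhi - blo) / (-2 * ahi) := by
  rw [response, abs_div]
  refine div_le_div₀ (by linarith [hμ.1, hμ.2]) ?_ (by linarith) ?_
  · exact abs_sub_le_iff.2 ⟨by linarith [hμ.2, hb.1], by linarith [hμ.1, hb.2]⟩
  · rw [abs_of_neg (by linarith)]
    linarith

theorem sum_one_div_le_card_div {s : Finset ι} {alo : ℝ} (ha : ∀ i ∈ s, alo ≤ a i ∧ a i < 0) :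
    ∑ i ∈ s, 1 / a i ≤ #s / alo := by
  have h := Finset.sum_le_card_nsmul s (fun i => 1 / a i) (1 / alo) fun i hi =>
    one_div_le_one_div_of_neg_of_le (ha i hi).2 (ha i hi).1
  rwa [nsmul_eq_mul, mul_one_div] at h

theorem abs_lagrangePayment_sub_vcgPayment_le [DecidableEq ι] {t : Finset ι} {i : ι}
    (hi : i ∉ t) (ht : t.Nonempty) {alo ahi blo bhi : ℝ}
    (ha : ∀ j ∈ insert i t, a j ∈ Set.Icc alo ahi) (hahi : ahi < 0)
    (hb : ∀ j ∈ insert i t, b j ∈ Set.Icc blo bhi) :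
    |lagrangePayment a b (insert i t) i - vcgPayment a b t i| ≤
      ((bhi - blo) / (-2 * ahi)) ^ 2 * -alo / #t := by
  have hneg : ∀ j ∈ insert i t, a j < 0 := fun j hj => (ha j hj).2.trans_lt hahi
  have hnegt : ∀ j ∈ t, a j < 0 := fun j hj => hneg j (mem_insert_of_mem hj)
  have hA' : ∑ j ∈ t, 1 / a j < 0 := Finset.sum_neg (fun j hj => one_div_neg.2 (hnegt j hj)) ht
  have hA : ∑ j ∈ insert i t, 1 / a j < 0 :=
    Finset.sum_neg (fun j hj => one_div_neg.2 (hneg j hj)) (insert_nonempty i t)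
  have halo : alo < 0 := (ha i (mem_insert_self i t)).1.trans_lt (hneg i (mem_insert_self i t))
  have hcard : (0 : ℝ) < #t := by exact_mod_cast ht.card_pos
  have hr := abs_response_le (shadowPrice_mem_Icc (insert_nonempty i t) hneg hb)
    (hb i (mem_insert_self i t)) (ha i (mem_insert_self i t)).2 hahi
  have hsum := sum_one_div_le_card_div fun j hj =>
    ⟨(ha j (mem_insert_of_mem hj)).1, hnegt j hj⟩
  rw [lagrangePayment_sub_vcgPayment hi (fun j hj => (hnegt j hj).ne) hA.ne hA'.ne, neg_div,
    abs_neg, abs_div, abs_of_neg hA', abs_pow]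
  calc |response a b (shadowPrice a b (insert i t)) i| ^ 2 / -∑ j ∈ t, 1 / a j
      ≤ ((bhi - blo) / (-2 * ahi)) ^ 2 / (#t / -alo) :=
        div_le_div₀ (sq_nonneg _) (pow_le_pow_left₀ (abs_nonneg _) hr 2)
          (div_pos hcard (neg_pos.2 halo)) (by rw [div_neg]; linarith)
    _ = ((bhi - blo) / (-2 * ahi)) ^ 2 * -alo / #t := by field_simp

end QuadraticWelfare

theorem vcg_payment_tendsto_lagrange_payment_general
    (a b : ℕ → ℝ) (alo ahi blo bhi : ℝ)
    (ha : ∀ i, 1 ≤ i → alo ≤ a i ∧ a i ≤ ahi) (hahi : ahi < 0)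
    (hb : ∀ i, 1 ≤ i → blo ≤ b i ∧ b i ≤ bhi)
    (γ lam u1 : ℕ → ℝ)
    (hγ : ∀ N : ℕ, γ N = (∑ i ∈ Finset.Icc 1 N, 1 / a i)⁻¹)
    (hlam : ∀ N : ℕ, lam N = γ N * ∑ i ∈ Finset.Icc 1 N, b i / a i)
    (hu1 : ∀ N : ℕ, u1 N = (lam N - b 1) / (2 * a 1))
    (U W : ℕ → ℕ → ℝ)
    (hUfeas : ∀ N : ℕ, 2 ≤ N → ∑ j ∈ Finset.Icc 1 N, U N j = 0)
    (hUopt : ∀ N : ℕ, 2 ≤ N → ∀ v : ℕ → ℝ, ∑ j ∈ Finset.Icc 1 N, v j = 0 →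
      ∑ j ∈ Finset.Icc 1 N, (a j * v j ^ 2 + b j * v j) ≤
        ∑ j ∈ Finset.Icc 1 N, (a j * U N j ^ 2 + b j * U N j))
    (hWfeas : ∀ N : ℕ, 2 ≤ N → ∑ j ∈ Finset.Icc 2 N, W N j = 0)
    (hWopt : ∀ N : ℕ, 2 ≤ N → ∀ v : ℕ → ℝ, ∑ j ∈ Finset.Icc 2 N, v j = 0 →
      ∑ j ∈ Finset.Icc 2 N, (a j * v j ^ 2 + b j * v j) ≤
        ∑ j ∈ Finset.Icc 2 N, (a j * W N j ^ 2 + b j * W N j))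
    (p1 : ℕ → ℝ)
    (hp1 : ∀ N : ℕ, p1 N =
      (∑ j ∈ Finset.Icc 2 N, (a j * W N j ^ 2 + b j * W N j)) -
        ∑ j ∈ Finset.Icc 2 N, (a j * U N j ^ 2 + b j * U N j)) :
    Tendsto (fun N : ℕ => lam N * u1 N - p1 N) atTop (nhds 0) := by
  have hneg : ∀ j, 1 ≤ j → a j < 0 := fun j hj => (ha j hj).2.trans_lt hahi
  have hsplit : ∀ N, 1 ≤ N → insert 1 (Icc 2 N) = Icc 1 N := fun N hN =>
    insert_Icc_add_one_left_eq_Icc hN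
  have hgap : ∀ N, 2 ≤ N →
      lam N * u1 N - p1 N = lagrangePayment a b (Icc 1 N) 1 - vcgPayment a b (Icc 2 N) 1 := by
    intro N hN
    have hU := eqOn_response_shadowPrice (nonempty_Icc.2 (by omega))
      (fun j hj => hneg j (mem_Icc.1 hj).1) (hUfeas N hN) (hUopt N hN)
    have hW := eqOn_response_shadowPrice (nonempty_Icc.2 hN)
      (fun j hj => hneg j (by linarith [(mem_Icc.1 hj).1])) (hWfeas N hN) (hWopt N hN)
    have hlamN : lam N = shadowPrice a b (Icc 1 N) := by rw [hlam, hγ]; rfl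
    rw [hp1, hu1, hlamN, lagrangePayment, vcgPayment, hsplit N (by omega)]
    congr 2
    · exact Finset.sum_congr rfl fun j hj => by rw [hW hj]
    · exact Finset.sum_congr rfl fun j hj => by
        rw [hU (Icc_subset_Icc_left (by norm_num) hj)]
  have hbound : ∀ᶠ N in atTop, ‖lam N * u1 N - p1 N‖ ≤
      ((bhi - blo) / (-2 * ahi)) ^ 2 * -alo / #(Icc 2 N) := by
    filter_upwards [eventually_ge_atTop 2] with N hN
    have hmem : ∀ j ∈ insert 1 (Icc 2 N), 1 ≤ j := by
      rw [hsplit N (by omega)]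
      exact fun j hj => (mem_Icc.1 hj).1
    rw [Real.norm_eq_abs, hgap N hN, ← hsplit N (by omega)]
    exact abs_lagrangePayment_sub_vcgPayment_le (by simp) (nonempty_Icc.2 hN)
      (fun j hj => ha j (hmem j hj)) hahi (fun j hj => hb j (hmem j hj))
  refine squeeze_zero_norm' hbound ((tendsto_const_div_atTop_nhds_zero_nat _).comp ?_)
  simpa using tendsto_sub_atTop_nat 1

/-- **Theorem 2, part 2.** For quadratic agents with uniformly bounded coefficients,
the VCG payment `p₁(N)` of agent `1` converges to its Lagrange payment
`λ*(N)·u₁*(N)` as the number of agents grows. -/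
theorem vcg_payment_tendsto_lagrange_payment
    (a b : ℕ → ℝ) (alo ahi blo bhi : ℝ)
    (ha : ∀ i, 1 ≤ i → alo ≤ a i ∧ a i ≤ ahi) (hahi : ahi < 0)
    (hb : ∀ i, 1 ≤ i → blo ≤ b i ∧ b i ≤ bhi) (hblo : 0 < blo)
    (γ lam u1 : ℕ → ℝ)
    (hγ : ∀ N : ℕ, γ N = (∑ i ∈ Finset.Icc 1 N, 1 / a i)⁻¹)
    (hlam : ∀ N : ℕ, lam N = γ N * ∑ i ∈ Finset.Icc 1 N, b i / a i)
    (hu1 : ∀ N : ℕ, u1 N = (lam N - b 1) / (2 * a 1))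
    (U W : ℕ → ℕ → ℝ)
    (hUfeas : ∀ N : ℕ, 2 ≤ N → ∑ j ∈ Finset.Icc 1 N, U N j = 0)
    (hUopt : ∀ N : ℕ, 2 ≤ N → ∀ v : ℕ → ℝ, ∑ j ∈ Finset.Icc 1 N, v j = 0 →
      ∑ j ∈ Finset.Icc 1 N, (a j * v j ^ 2 + b j * v j) ≤
        ∑ j ∈ Finset.Icc 1 N, (a j * U N j ^ 2 + b j * U N j))
    (hWfeas : ∀ N : ℕ, 2 ≤ N → ∑ j ∈ Finset.Icc 2 N, W N j = 0)
    (hWopt : ∀ N : ℕ, 2 ≤ N → ∀ v : ℕ → ℝ, ∑ j ∈ Finset.Icc 2 N, v j = 0 →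
      ∑ j ∈ Finset.Icc 2 N, (a j * v j ^ 2 + b j * v j) ≤
        ∑ j ∈ Finset.Icc 2 N, (a j * W N j ^ 2 + b j * W N j))
    (p1 : ℕ → ℝ)
    (hp1 : ∀ N : ℕ, p1 N =
      (∑ j ∈ Finset.Icc 2 N, (a j * W N j ^ 2 + b j * W N j)) -
        ∑ j ∈ Finset.Icc 2 N, (a j * U N j ^ 2 + b j * U N j)) :
    Tendsto (fun N : ℕ => lam N * u1 N - p1 N) atTop (nhds 0) :=
  vcg_payment_tendsto_lagrange_payment_general a b alo ahi blo bhi ha hahi hb γ lam u1 hγ hlam hu1 U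
    W hUfeas hUopt hWfeas hWopt p1 hp1
end

section
/- Consider N agents and horizon T ≥ 1. A bid for agent j is a triple (F̂_j, ĝ_j, x̂_{j,0}) with F̂_j : ℝ×ℝ → ℝ, ĝ_j : ℝ×ℝ → ℝ, x̂_{j,0} ∈ ℝ. Given a profile of bids, call (x, u) with x : {1,…,N}×{0,…,T} → ℝ, u : {1,…,N}×{0,…,T−1} → ℝ feasible for that profile if x_j(t+1) = ĝ_j(x_j(t), u_j(t)) and x_j(0) = x̂_{j,0} for all j and t, and Σ_{j=1}^N u_j(t) = 0 for all t. Fix an agent i with true data (F_i, g_i, x_{i,0}), and define its realized utility of a pair of sequences (x_i(·), u_i(·)) as the extended real Σ_{t=0}^{T−1} F_i(x_i(t), u_i(t)) if x_i(t+1) = g_i(x_i(t), u_i(t)) for all t and x_i(0) = x_{i,0}, and −∞ otherwise. Fix bids (F̂_j, ĝ_j, x̂_{j,0}) of all agents j ≠ i, an arbitrary constant h ∈ ℝ, and an arbitrary bid (F̂_i, ĝ_i, x̂_{i,0}) of agent i. Suppose (x̄, ū) maximizes Σ_{j=1}^N Σ_{t=0}^{T−1} [bid utility of j] over all pairs feasible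 for the profile in which agent i bids truthfully (F_i, g_i, x_{i,0}), and (x̂, û) maximizes the corresponding sum over all pairs feasible for the profile in which agent i bids (F̂_i, ĝ_i, x̂_{i,0}). Define the Groves payment of agent i under an assignment (x, u) as p_i(x, u) := h − Σ_{j≠i} Σ_{t=0}^{T−1} F̂_j(x_j(t), u_j(t)). Then, as extended reals, [realized utility of (x̄_i, ū_i)] − p_i(x̄, ū) ≥ [realized utility of (x̂_i, û_i)] − p_i(x̂, û). -/
open Finset
open scoped Classical

/-- A pair of state/control trajectories `(x, u)` is feasible for the bid profile
with dynamics `g` and initial conditions `x0`: each agent's bid dynamics and initial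
condition hold, and generation/consumption is balanced at every period `t < T`. -/
def DynFeasible (N T : ℕ) (g : Fin N → ℝ → ℝ → ℝ) (x0 : Fin N → ℝ)
    (x u : Fin N → ℕ → ℝ) : Prop :=
  (∀ j, ∀ t < T, x j (t + 1) = g j (x j t) (u j t)) ∧
    (∀ j, x j 0 = x0 j) ∧
    (∀ t < T, ∑ j, u j t = 0)

/-- The total bid welfare of an assignment `(x, u)` under bid utilities `F`. -/
def DynBidWelfare (N T : ℕ) (F : Fin N → ℝ → ℝ → ℝ) (x u : Fin N → ℕ → ℝ) : ℝ :=
  ∑ j, ∑ t ∈ Finset.range T, F j (x j t) (u j t)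

/-!
Groves' argument: under an assignment that respects agent `i`'s true dynamics, its net
utility is its true utility plus the others' bid utilities minus `h`, i.e. the bid welfare
of the truthful profile minus `h`. The truthful maximizer `(x̄, ū)` respects them. If the
assignment `(x̂, û)` obtained from another bid does not, its net utility is `−∞`; if it does,
it is feasible for the truthful profile, so its welfare there is at most that of `(x̄, ū)`.
-/

open Function

-- Reducible, so that rewriting with `if_pos` finds it as the guard of the realized utility.
abbrev FollowsDynamics (T : ℕ) (g : ℝ → ℝ → ℝ) (x0 : ℝ) (xi ui : ℕ → ℝ) : Prop :=
  (∀ t < T, xi (t + 1) = g (xi t) (ui t)) ∧ xi 0 = x0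

section

variable {N T : ℕ} {i : Fin N} {g : Fin N → ℝ → ℝ → ℝ} {x0 : Fin N → ℝ}
  {gi : ℝ → ℝ → ℝ} {xi0 : ℝ} {x u : Fin N → ℕ → ℝ}

theorem DynFeasible.followsDynamics_of_update
    (hf : DynFeasible N T (update g i gi) (update x0 i xi0) x u) :
    FollowsDynamics T gi xi0 (x i) (u i) :=
  ⟨by simpa only [update_self] using hf.1 i, by simpa only [update_self] using hf.2.1 i⟩

theorem DynFeasible.update (hf : DynFeasible N T g x0 x u)
    (hi : FollowsDynamics T gi xi0 (x i) (u i)) :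
    DynFeasible N T (update g i gi) (update x0 i xi0) x u := by
  refine ⟨fun j t ht => ?_, fun j => ?_, hf.2.2⟩
  · rcases eq_or_ne j i with rfl | hji
    · simpa only [update_self] using hi.1 t ht
    · simpa only [update_of_ne hji] using hf.1 j t ht
  · rcases eq_or_ne j i with rfl | hji
    · simpa only [update_self] using hi.2
    · simpa only [update_of_ne hji] using hf.2.1 j

end

theorem dynBidWelfare_update (N T : ℕ) (F : Fin N → ℝ → ℝ → ℝ) (i : Fin N)
    (Fi : ℝ → ℝ → ℝ) (x u : Fin N → ℕ → ℝ) :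
    DynBidWelfare N T (update F i Fi) x u =
      ∑ t ∈ range T, Fi (x i t) (u i t) +
        ∑ j ∈ univ.erase i, ∑ t ∈ range T, F j (x j t) (u j t) := by
  rw [DynBidWelfare, ← add_sum_erase _ _ (mem_univ i), update_self]
  congr 1
  exact sum_congr rfl fun j hj => by rw [update_of_ne (ne_of_mem_erase hj)]

theorem groves_dynamic_truthtelling_general
    (N T : ℕ) (i : Fin N)
    -- bid profile in which agent `i` bids `(F̂ᵢ, ĝᵢ, x̂ᵢ₀)`, arbitrary
    (Fhat ghat : Fin N → ℝ → ℝ → ℝ) (xhat0 : Fin N → ℝ)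
    -- true data of agent `i`
    (Fi gi : ℝ → ℝ → ℝ) (xi0 : ℝ)
    -- Groves constant
    (h : ℝ)
    -- realized utility of agent `i` for a pair of sequences, as an extended real
    (RU : (ℕ → ℝ) → (ℕ → ℝ) → EReal)
    (hRU : ∀ xi ui : ℕ → ℝ,
      RU xi ui =
        if (∀ t < T, xi (t + 1) = gi (xi t) (ui t)) ∧ xi 0 = xi0 then
          (((∑ t ∈ Finset.range T, Fi (xi t) (ui t)) : ℝ) : EReal)
        else ⊥)
    -- Groves payment of agent `i` under an assignment `(x, u)`
    (pay : (Fin N → ℕ → ℝ) → (Fin N → ℕ → ℝ) → ℝ)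
    (hpay : ∀ x u, pay x u =
      h - ∑ j ∈ Finset.univ.erase i, ∑ t ∈ Finset.range T, Fhat j (x j t) (u j t))
    -- `(x̄, ū)` maximizes bid welfare for the profile where agent `i` bids truthfully
    (xb ub : Fin N → ℕ → ℝ)
    (hxbFeas : DynFeasible N T (Function.update ghat i gi)
      (Function.update xhat0 i xi0) xb ub)
    (hxbOpt : ∀ x u, DynFeasible N T (Function.update ghat i gi)
        (Function.update xhat0 i xi0) x u →
      DynBidWelfare N T (Function.update Fhat i Fi) x u ≤
        DynBidWelfare N T (Function.update Fhat i Fi) xb ub)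
    -- `(x̂, û)` maximizes bid welfare for the profile where agent `i` bids `(F̂ᵢ, ĝᵢ, x̂ᵢ₀)`
    (xh uh : Fin N → ℕ → ℝ)
    (hxhFeas : DynFeasible N T ghat xhat0 xh uh) :
    RU (xh i) (uh i) - ((pay xh uh : ℝ) : EReal) ≤
      RU (xb i) (ub i) - ((pay xb ub : ℝ) : EReal) := by
  have hxbFollows := hxbFeas.followsDynamics_of_update
  rw [hRU, hRU, if_pos hxbFollows]
  split_ifs with hxhFollows
  · have hwelfare := hxbOpt xh uh (hxhFeas.update hxhFollows)
    rw [dynBidWelfare_update, dynBidWelfare_update] at hwelfare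
    rw [← EReal.coe_sub, ← EReal.coe_sub, EReal.coe_le_coe_iff, hpay, hpay]
    linarith
  · rw [EReal.bot_sub]
    exact bot_le

/-- **Theorem 3.** Truth-telling of utility function, state dynamics, and initial
condition is a dominant strategy under the Groves mechanism for a deterministic
dynamic system: the realized net utility (an extended real, `−∞` when the assignment
violates the agent's true dynamics or initial condition) of agent `i` under the
assignment computed from its truthful bid is at least the one computed from any
other bid, whatever the bids of the others. -/
theorem groves_dynamic_truthtelling
    (N T : ℕ) (hT : 1 ≤ T) (i : Fin N)
    -- bid profile in which agent `i` bids `(F̂ᵢ, ĝᵢ, x̂ᵢ₀)`, arbitrary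
    (Fhat ghat : Fin N → ℝ → ℝ → ℝ) (xhat0 : Fin N → ℝ)
    -- true data of agent `i`
    (Fi gi : ℝ → ℝ → ℝ) (xi0 : ℝ)
    -- Groves constant
    (h : ℝ)
    -- realized utility of agent `i` for a pair of sequences, as an extended real
    (RU : (ℕ → ℝ) → (ℕ → ℝ) → EReal)
    (hRU : ∀ xi ui : ℕ → ℝ,
      RU xi ui =
        if (∀ t < T, xi (t + 1) = gi (xi t) (ui t)) ∧ xi 0 = xi0 then
          (((∑ t ∈ Finset.range T, Fi (xi t) (ui t)) : ℝ) : EReal)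
        else ⊥)
    -- Groves payment of agent `i` under an assignment `(x, u)`
    (pay : (Fin N → ℕ → ℝ) → (Fin N → ℕ → ℝ) → ℝ)
    (hpay : ∀ x u, pay x u =
      h - ∑ j ∈ Finset.univ.erase i, ∑ t ∈ Finset.range T, Fhat j (x j t) (u j t))
    -- `(x̄, ū)` maximizes bid welfare for the profile where agent `i` bids truthfully
    (xb ub : Fin N → ℕ → ℝ)
    (hxbFeas : DynFeasible N T (Function.update ghat i gi)
      (Function.update xhat0 i xi0) xb ub)
    (hxbOpt : ∀ x u, DynFeasible N T (Function.update ghat i gi)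
        (Function.update xhat0 i xi0) x u →
      DynBidWelfare N T (Function.update Fhat i Fi) x u ≤
        DynBidWelfare N T (Function.update Fhat i Fi) xb ub)
    -- `(x̂, û)` maximizes bid welfare for the profile where agent `i` bids `(F̂ᵢ, ĝᵢ, x̂ᵢ₀)`
    (xh uh : Fin N → ℕ → ℝ)
    (hxhFeas : DynFeasible N T ghat xhat0 xh uh)
    (hxhOpt : ∀ x u, DynFeasible N T ghat xhat0 x u →
      DynBidWelfare N T Fhat x u ≤ DynBidWelfare N T Fhat xh uh) :
    RU (xh i) (uh i) - ((pay xh uh : ℝ) : EReal) ≤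
      RU (xb i) (ub i) - ((pay xb ub : ℝ) : EReal) :=
  groves_dynamic_truthtelling_general N T i Fhat ghat xhat0 Fi gi xi0 h RU hRU pay hpay xb ub
    hxbFeas hxbOpt xh uh hxhFeas
end

section
/- Let T ≥ 1 and fix 0 < m ≤ M and v̄ > 0. Let Wᵢ (i ∈ ℕ, i ≥ 1) be symmetric negative definite T×T real matrices with −M·I ⪯ Wᵢ ⪯ −m·I, and Vᵢ ∈ ℝ^T with ‖Vᵢ‖ ≤ v̄. For each N ≥ 2 let F_total(N) be the optimal value of: maximize Σ_{i=1}^N (ΩᵢᵀWᵢΩᵢ + VᵢᵀΩᵢ) over (Ω₁,…,Ω_N) ∈ (ℝ^T)^N subject to Σ_{i=1}^N Ωᵢ = 0, and for each i ≤ N let Hᵢ(N) be the optimal value of the analogous problem over the agents j ≤ N with j ≠ i, subject to Σ_{j≠i} Ω_j = 0. Assume that for every N: F_total(N) > 0, Hᵢ(N) > 0 for all i ≤ N, and (N−1)·max_{i≤N} Hᵢ(N) ≤ Σ_{i=1}^N Hᵢ(N). Then lim_{N→∞} (N−1)·F_total(N)/Σ_{i=1}^N Hᵢ(N) = 1 and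 lim_{N→∞} F_total(N)/max_{i≤N} Hᵢ(N) = 1; consequently any sequence c^N in the interval [(N−1)·F_total(N)/ΣᵢHᵢ(N), F_total(N)/max_i Hᵢ(N)] satisfies lim_{N→∞} c^N = 1. -/
open Finset Filter Matrix

/-!
Let `Ω` maximize the full problem and write `Qᵢ = Ωᵢ ⬝ᵥ Ωᵢ`. Stationarity along balanced
directions gives `F = -∑ Ωⱼ ⬝ᵥ Wⱼ Ωⱼ ≥ m ∑ Qⱼ`. Dropping agent `i` and spreading `Ωᵢ` evenly
over the other `N - 1` agents is feasible for the problem without `i`, and (again by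
stationarity) costs at most `M Qᵢ N / (N - 1)`. Summing over `i`,
`∑ Hᵢ ≥ N F (1 - (M / m) / (N - 1))`, while `Hᵢ ≤ F` because a balanced allocation of the
others extends by zero. So both `∑ Hᵢ / N` and `max Hᵢ` lie between `F (1 - O(1/N))` and `F`.
-/

lemma eq_zero_of_forall_mul_add_sq_mul_nonpos {D C : ℝ}
    (h : ∀ t : ℝ, t * D + t ^ 2 * C ≤ 0) : D = 0 := by
  have hscaled : (1 + |C|) ^ 2 * (D / (1 + |C|) * D + (D / (1 + |C|)) ^ 2 * C)
      = D ^ 2 * (1 + |C| + C) := by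
    field_simp
  have := mul_nonpos_of_nonneg_of_nonpos (sq_nonneg (1 + |C|)) (h (D / (1 + |C|)))
  nlinarith [neg_abs_le C, sq_nonneg D]

namespace Matrix

variable {n : Type*} [Fintype n] {A : Matrix n n ℝ}

theorem IsSymm.quadratic_add (hA : A.IsSymm) (v x d : n → ℝ) :
    (x + d) ⬝ᵥ (A *ᵥ (x + d)) + v ⬝ᵥ (x + d)
      = x ⬝ᵥ (A *ᵥ x) + v ⬝ᵥ x + ((2 : ℝ) • (A *ᵥ x) + v) ⬝ᵥ d + d ⬝ᵥ (A *ᵥ d) := by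
  have hsymm : x ⬝ᵥ (A *ᵥ d) = d ⬝ᵥ (A *ᵥ x) := by
    rw [dotProduct_mulVec, ← mulVec_transpose, hA.eq, dotProduct_comm]
  simp only [mulVec_add, dotProduct_add, add_dotProduct, smul_dotProduct, smul_eq_mul, hsymm,
    dotProduct_comm (A *ᵥ x) d]
  ring

variable [DecidableEq n]

theorem dotProduct_mulVec_le_of_posSemidef {μ : ℝ}
    (h : (-(μ • (1 : Matrix n n ℝ)) - A).PosSemidef) (x : n → ℝ) :
    x ⬝ᵥ (A *ᵥ x) ≤ -μ * (x ⬝ᵥ x) := by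
  have := h.dotProduct_mulVec_nonneg x
  simp only [star_trivial, sub_mulVec, neg_mulVec, smul_mulVec, one_mulVec, dotProduct_sub,
    dotProduct_neg, dotProduct_smul, smul_eq_mul] at this
  linarith

theorem le_dotProduct_mulVec_of_posSemidef {μ : ℝ}
    (h : (A + μ • (1 : Matrix n n ℝ)).PosSemidef) (x : n → ℝ) : -μ * (x ⬝ᵥ x) ≤ x ⬝ᵥ (A *ᵥ x) := by
  have := h.dotProduct_mulVec_nonneg x
  simp only [star_trivial, add_mulVec, smul_mulVec, one_mulVec, dotProduct_add,
    dotProduct_smul, smul_eq_mul] at this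
  linarith

end Matrix

section Welfare

variable {ι n : Type*} [Fintype n]

def groupWelfare (W : ι → Matrix n n ℝ) (V : ι → n → ℝ) (s : Finset ι) (Ω : ι → n → ℝ) : ℝ :=
  ∑ j ∈ s, (Ω j ⬝ᵥ (W j *ᵥ Ω j) + V j ⬝ᵥ Ω j)

def balancedWelfares (W : ι → Matrix n n ℝ) (V : ι → n → ℝ) (s : Finset ι) : Set ℝ :=
  {v | ∃ Ω : ι → n → ℝ, ∑ j ∈ s, Ω j = 0 ∧ v = groupWelfare W V s Ω}

variable {W : ι → Matrix n n ℝ} {V : ι → n → ℝ} {s : Finset ι}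

theorem balancedWelfares_mono {t : Finset ι} (h : t ⊆ s) :
    balancedWelfares W V t ⊆ balancedWelfares W V s := by
  classical
  rintro _ ⟨Ω, hΩ, rfl⟩
  refine ⟨fun j => if j ∈ t then Ω j else 0, ?_, ?_⟩
  · rw [← sum_subset h fun j _ hj => by simp [hj], ← hΩ]
    exact sum_congr rfl fun j hj => by simp [hj]
  · rw [groupWelfare, groupWelfare, ← sum_subset h fun j _ hj => by simp [hj]]
    exact sum_congr rfl fun j hj => by simp [hj]

theorem sum_gradient_dotProduct_eq_zero_of_isMax (hW : ∀ j ∈ s, (W j).IsSymm) {Ω Δ : ι → n → ℝ}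
    (hΩ : ∑ j ∈ s, Ω j = 0) (hmax : groupWelfare W V s Ω ∈ upperBounds (balancedWelfares W V s))
    (hΔ : ∑ j ∈ s, Δ j = 0) :
    ∑ j ∈ s, ((2 : ℝ) • (W j *ᵥ Ω j) + V j) ⬝ᵥ Δ j = 0 := by
  -- the welfare along `Ω + t • Δ` is a quadratic in `t` that is maximal at `t = 0`
  refine eq_zero_of_forall_mul_add_sq_mul_nonpos (C := ∑ j ∈ s, Δ j ⬝ᵥ (W j *ᵥ Δ j)) fun t => ?_
  have hexpand : groupWelfare W V s (Ω + t • Δ) = groupWelfare W V s Ω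
      + t * ∑ j ∈ s, ((2 : ℝ) • (W j *ᵥ Ω j) + V j) ⬝ᵥ Δ j
      + t ^ 2 * ∑ j ∈ s, Δ j ⬝ᵥ (W j *ᵥ Δ j) := by
    rw [groupWelfare, groupWelfare, mul_sum, mul_sum, ← sum_add_distrib, ← sum_add_distrib]
    refine sum_congr rfl fun j hj => ?_
    rw [Pi.add_apply, Pi.smul_apply, (hW j hj).quadratic_add]
    simp only [dotProduct_smul, smul_dotProduct, mulVec_smul, smul_eq_mul]
    ring
  have := hmax ⟨Ω + t • Δ, by simp [sum_add_distrib, ← smul_sum, hΩ, hΔ], rfl⟩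
  linarith

theorem groupWelfare_eq_neg_sum_of_isMax (hW : ∀ j ∈ s, (W j).IsSymm) {Ω : ι → n → ℝ}
    (hΩ : ∑ j ∈ s, Ω j = 0) (hmax : groupWelfare W V s Ω ∈ upperBounds (balancedWelfares W V s)) :
    groupWelfare W V s Ω = -∑ j ∈ s, Ω j ⬝ᵥ (W j *ᵥ Ω j) := by
  have hstat := sum_gradient_dotProduct_eq_zero_of_isMax hW hΩ hmax hΩ
  simp only [add_dotProduct, smul_dotProduct, smul_eq_mul, dotProduct_comm (W _ *ᵥ Ω _),
    sum_add_distrib, ← mul_sum] at hstat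
  rw [groupWelfare, sum_add_distrib]
  linarith

theorem groupWelfare_erase_add_of_isMax [DecidableEq ι] (hW : ∀ j ∈ s, (W j).IsSymm)
    {Ω : ι → n → ℝ} (hΩ : ∑ j ∈ s, Ω j = 0)
    (hmax : groupWelfare W V s Ω ∈ upperBounds (balancedWelfares W V s)) {i : ι} (hi : i ∈ s)
    {d : n → ℝ} (hd : #(s.erase i) • d = Ω i) :
    groupWelfare W V (s.erase i) (fun j => Ω j + d)
      = groupWelfare W V s Ω + Ω i ⬝ᵥ (W i *ᵥ Ω i) + ∑ j ∈ s.erase i, d ⬝ᵥ (W j *ᵥ d) := by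
  have hstat := sum_gradient_dotProduct_eq_zero_of_isMax hW hΩ hmax
    (Δ := fun j => if j = i then -Ω i else d) (by
      rw [← sum_erase_add _ _ hi, if_pos rfl,
        sum_congr rfl fun j hj => if_neg (ne_of_mem_erase hj), sum_const, hd, add_neg_cancel])
  rw [← sum_erase_add _ _ hi, if_pos rfl,
    sum_congr rfl fun j hj => by rw [if_neg (ne_of_mem_erase hj)]] at hstat
  have hgrad_i : ((2 : ℝ) • (W i *ᵥ Ω i) + V i) ⬝ᵥ -Ω i
      = -(2 * (Ω i ⬝ᵥ (W i *ᵥ Ω i)) + V i ⬝ᵥ Ω i) := by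
    simp only [dotProduct_neg, add_dotProduct, smul_dotProduct, smul_eq_mul,
      dotProduct_comm (W i *ᵥ Ω i)]
  rw [groupWelfare, groupWelfare, ← sum_erase_add _ _ hi,
    sum_congr rfl fun j hj => (hW j (mem_of_mem_erase hj)).quadratic_add (V j) (Ω j) d,
    sum_add_distrib, sum_add_distrib]
  linarith

variable [DecidableEq n]

theorem groupWelfare_sub_le_of_mem_upperBounds_erase [DecidableEq ι] {M h : ℝ}
    (hW : ∀ j ∈ s, (W j).IsSymm) (hWlo : ∀ j ∈ s, (W j + M • (1 : Matrix n n ℝ)).PosSemidef)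
    {Ω : ι → n → ℝ} (hΩ : ∑ j ∈ s, Ω j = 0)
    (hmax : groupWelfare W V s Ω ∈ upperBounds (balancedWelfares W V s)) {i : ι} (hi : i ∈ s)
    (hs : 1 < #s) (hh : h ∈ upperBounds (balancedWelfares W V (s.erase i))) :
    groupWelfare W V s Ω - M * (1 + (#(s.erase i) : ℝ)⁻¹) * (Ω i ⬝ᵥ Ω i) ≤ h := by
  set k : ℝ := (#(s.erase i) : ℝ)
  have hk : k ≠ 0 := by
    simp only [k, card_erase_of_mem hi, Nat.cast_ne_zero]
    omega
  set d := k⁻¹ • Ω i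
  have hd : #(s.erase i) • d = Ω i := by
    rw [← Nat.cast_smul_eq_nsmul ℝ, smul_smul, mul_inv_cancel₀ hk, one_smul]
  have hfeas : ∑ j ∈ s.erase i, (Ω j + d) = 0 := by
    rw [sum_add_distrib, sum_const, hd, sum_erase_add _ _ hi, hΩ]
  have hshift := hh ⟨_, hfeas, rfl⟩
  rw [groupWelfare_erase_add_of_isMax hW hΩ hmax hi hd] at hshift
  have hdd : ∑ j ∈ s.erase i, -M * (d ⬝ᵥ d) ≤ ∑ j ∈ s.erase i, d ⬝ᵥ (W j *ᵥ d) :=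
    sum_le_sum fun j hj => le_dotProduct_mulVec_of_posSemidef (hWlo j (mem_of_mem_erase hj)) d
  have hii := le_dotProduct_mulVec_of_posSemidef (hWlo i hi) (Ω i)
  rw [sum_const, nsmul_eq_mul] at hdd
  have hdd' : k * (-M * (d ⬝ᵥ d)) = -M * k⁻¹ * (Ω i ⬝ᵥ Ω i) := by
    simp only [d, smul_dotProduct, dotProduct_smul, smul_eq_mul]
    field_simp
  linarith

theorem card_mul_mul_one_sub_le_sum_of_isGreatest [DecidableEq ι] {m M F : ℝ} {H : ι → ℝ}
    (hm : 0 < m) (hM : 0 ≤ M) (hW : ∀ j ∈ s, (W j).IsSymm)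
    (hWlo : ∀ j ∈ s, (W j + M • (1 : Matrix n n ℝ)).PosSemidef)
    (hWhi : ∀ j ∈ s, (-(m • (1 : Matrix n n ℝ)) - W j).PosSemidef) (hs : 1 < #s)
    (hF : IsGreatest (balancedWelfares W V s) F)
    (hH : ∀ i ∈ s, H i ∈ upperBounds (balancedWelfares W V (s.erase i))) :
    (#s : ℝ) * F * (1 - M / m / ((#s : ℝ) - 1)) ≤ ∑ i ∈ s, H i := by
  obtain ⟨⟨Ω, hΩ, rfl⟩, hmax⟩ := hF
  set N : ℝ := (#s : ℝ)
  have hcard : ∀ i ∈ s, (#(s.erase i) : ℝ) = N - 1 := fun i hi => by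
    rw [card_erase_of_mem hi, Nat.cast_pred (by omega)]
  have hN : 0 < N - 1 := by
    have : (1 : ℝ) < #s := by exact_mod_cast hs
    linarith
  have hQ : m * ∑ i ∈ s, Ω i ⬝ᵥ Ω i ≤ groupWelfare W V s Ω := by
    rw [groupWelfare_eq_neg_sum_of_isMax hW hΩ hmax, mul_sum, ← sum_neg_distrib]
    exact sum_le_sum fun j hj => by
      linarith [dotProduct_mulVec_le_of_posSemidef (hWhi j hj) (Ω j)]
  have hsum := sum_le_sum fun i hi => hcard i hi ▸
    groupWelfare_sub_le_of_mem_upperBounds_erase hW hWlo hΩ hmax hi hs (hH i hi)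
  rw [sum_sub_distrib, sum_const, nsmul_eq_mul, ← mul_sum] at hsum
  have hQ' := mul_le_mul_of_nonneg_left ((le_div_iff₀' hm).2 hQ)
    (by positivity : 0 ≤ M * (1 + (N - 1)⁻¹))
  have e : N * groupWelfare W V s Ω * (1 - M / m / (N - 1))
      = N * groupWelfare W V s Ω - M * (1 + (N - 1)⁻¹) * (groupWelfare W V s Ω / m) := by
    field_simp
    ring
  linarith

end Welfare

theorem tendsto_div_of_mul_one_sub_le {α : Type*} {l : Filter α} {f g ε : α → ℝ}
    (hε : Tendsto ε l (nhds 0)) (hf : ∀ᶠ x in l, 0 < f x)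
    (hlo : ∀ᶠ x in l, f x * (1 - ε x) ≤ g x) (hhi : ∀ᶠ x in l, g x ≤ f x) :
    Tendsto (fun x => f x / g x) l (nhds 1) := by
  have hupper : Tendsto (fun x => (1 - ε x)⁻¹) l (nhds 1) := by
    simpa using (tendsto_const_nhds.sub hε).inv₀ (by norm_num : (1 : ℝ) - 0 ≠ 0)
  refine tendsto_of_tendsto_of_tendsto_of_le_of_le' tendsto_const_nhds hupper ?_ ?_
  · filter_upwards [hf, hlo, hhi, hε.eventually_lt_const one_pos] with x hfx hlox hhix hεx
    exact (one_le_div (lt_of_lt_of_le (by nlinarith) hlox)).2 hhix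
  · filter_upwards [hf, hlo, hε.eventually_lt_const one_pos] with x hfx hlox hεx
    have hg : 0 < g x := lt_of_lt_of_le (by nlinarith) hlox
    rw [div_le_iff₀ hg, inv_mul_eq_div, le_div_iff₀ (by linarith)]
    exact hlox

theorem tendsto_scaled_ratios {F S Hm ε : ℕ → ℝ} (hε : Tendsto ε atTop (nhds 0))
    (hF : ∀ᶠ N in atTop, 0 < F N) (hS : ∀ᶠ N in atTop, N * F N * (1 - ε N) ≤ S N)
    (hSHm : ∀ᶠ N in atTop, S N ≤ N * Hm N) (hHmF : ∀ᶠ N in atTop, Hm N ≤ F N) :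
    Tendsto (fun N : ℕ => ((N : ℝ) - 1) * F N / S N) atTop (nhds 1) ∧
      Tendsto (fun N => F N / Hm N) atTop (nhds 1) := by
  have hpos : ∀ᶠ N : ℕ in atTop, (0 : ℝ) < N :=
    (eventually_gt_atTop 0).mono fun N hN => Nat.cast_pos.2 hN
  have hmean_lo : ∀ᶠ N : ℕ in atTop, F N * (1 - ε N) ≤ S N / N := by
    filter_upwards [hpos, hS] with N hN hSN
    rw [le_div_iff₀ hN]
    linarith
  have hmean_hi : ∀ᶠ N : ℕ in atTop, S N / N ≤ Hm N := by
    filter_upwards [hpos, hSHm] with N hN hSN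
    rwa [div_le_iff₀' hN]
  have hmean := tendsto_div_of_mul_one_sub_le hε hF hmean_lo
    (hmean_hi.and hHmF |>.mono fun N h => h.1.trans h.2)
  refine ⟨?_, tendsto_div_of_mul_one_sub_le hε hF
    (hmean_lo.and hmean_hi |>.mono fun N h => h.1.trans h.2) hHmF⟩
  have hfactor : Tendsto (fun N : ℕ => 1 - 1 / (N : ℝ)) atTop (nhds 1) := by
    simpa using (tendsto_const_nhds (x := (1 : ℝ))).sub tendsto_one_div_atTop_nhds_zero_nat
  refine (one_mul (1 : ℝ) ▸ hfactor.mul hmean).congr' ?_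
  filter_upwards [hpos] with N hN
  field_simp

theorem scaled_vcg_factor_tendsto_one_dynamic_general
    (T : ℕ)
    (m M : ℝ) (hm : 0 < m) (hmM : m ≤ M)
    (W : ℕ → Matrix (Fin T) (Fin T) ℝ) (V : ℕ → Fin T → ℝ)
    (hWsymm : ∀ i : ℕ, 1 ≤ i → (W i).IsSymm)
    (hWlo : ∀ i : ℕ, 1 ≤ i →
      (W i + M • (1 : Matrix (Fin T) (Fin T) ℝ)).PosSemidef)
    (hWhi : ∀ i : ℕ, 1 ≤ i →
      (-(m • (1 : Matrix (Fin T) (Fin T) ℝ)) - W i).PosSemidef)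
    (Ftot : ℕ → ℝ) (H : ℕ → ℕ → ℝ) (Hmax : ℕ → ℝ)
    (hFtot : ∀ N : ℕ, 2 ≤ N → IsGreatest
      {v : ℝ | ∃ Ω : ℕ → Fin T → ℝ, ∑ j ∈ Finset.Icc 1 N, Ω j = 0 ∧
        v = ∑ j ∈ Finset.Icc 1 N, (Ω j ⬝ᵥ (W j *ᵥ Ω j) + V j ⬝ᵥ Ω j)} (Ftot N))
    (hH : ∀ N : ℕ, 2 ≤ N → ∀ i ∈ Finset.Icc 1 N, IsGreatest
      {v : ℝ | ∃ Ω : ℕ → Fin T → ℝ, ∑ j ∈ (Finset.Icc 1 N).erase i, Ω j = 0 ∧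
        v = ∑ j ∈ (Finset.Icc 1 N).erase i,
          (Ω j ⬝ᵥ (W j *ᵥ Ω j) + V j ⬝ᵥ Ω j)} (H N i))
    (hHmax : ∀ N : ℕ, 2 ≤ N → IsGreatest
      {v : ℝ | ∃ i ∈ Finset.Icc 1 N, v = H N i} (Hmax N))
    (hFpos : ∀ N : ℕ, 2 ≤ N → 0 < Ftot N) :
    Tendsto (fun N : ℕ => ((N : ℝ) - 1) * Ftot N / ∑ i ∈ Finset.Icc 1 N, H N i)
        atTop (nhds 1) ∧
      Tendsto (fun N : ℕ => Ftot N / Hmax N) atTop (nhds 1) ∧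
      ∀ c : ℕ → ℝ,
        (∀ N : ℕ, 2 ≤ N →
          ((N : ℝ) - 1) * Ftot N / (∑ i ∈ Finset.Icc 1 N, H N i) ≤ c N ∧
            c N ≤ Ftot N / Hmax N) →
        Tendsto c atTop (nhds 1) := by
  have hbounds : ∀ N : ℕ, 2 ≤ N →
      N * Ftot N * (1 - M / m / ((N : ℝ) - 1)) ≤ ∑ i ∈ Icc 1 N, H N i ∧
        ∑ i ∈ Icc 1 N, H N i ≤ N * Hmax N ∧ Hmax N ≤ Ftot N := by
    intro N hN
    have hpos : ∀ j ∈ Icc 1 N, 1 ≤ j := fun j hj => (mem_Icc.1 hj).1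
    have hHle : ∀ i ∈ Icc 1 N, H N i ≤ Hmax N := fun i hi => (hHmax N hN).2 ⟨i, hi, rfl⟩
    refine ⟨?_, ?_, ?_⟩
    · simpa using card_mul_mul_one_sub_le_sum_of_isGreatest hm (hm.le.trans hmM)
        (fun j hj => hWsymm j (hpos j hj)) (fun j hj => hWlo j (hpos j hj))
        (fun j hj => hWhi j (hpos j hj)) (by simp; omega) (hFtot N hN)
        (fun i hi => (hH N hN i hi).2)
    · simpa using sum_le_card_nsmul _ _ _ hHle
    · obtain ⟨i, hi, hattained⟩ := (hHmax N hN).1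
      exact hattained ▸ (hH N hN i hi).mono (hFtot N hN) (balancedWelfares_mono (erase_subset i _))
  have hε : Tendsto (fun N : ℕ => M / m / ((N : ℝ) - 1)) atTop (nhds 0) :=
    tendsto_const_nhds.div_atTop (tendsto_atTop_add_const_right _ _ tendsto_natCast_atTop_atTop)
  have hlarge := eventually_ge_atTop 2
  obtain ⟨hlower, hupper⟩ := tendsto_scaled_ratios hε (hlarge.mono hFpos)
    (hlarge.mono fun N hN => (hbounds N hN).1) (hlarge.mono fun N hN => (hbounds N hN).2.1)
    (hlarge.mono fun N hN => (hbounds N hN).2.2)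
  refine ⟨hlower, hupper, fun c hc => tendsto_of_tendsto_of_tendsto_of_le_of_le' hlower hupper
    (hlarge.mono fun N hN => (hc N hN).1) (hlarge.mono fun N hN => (hc N hN).2)⟩

/-- **Theorem 4, part 1 (block-quadratic form).** For agents with quadratic
utilities `ΩᵢᵀWᵢΩᵢ + VᵢᵀΩᵢ` over a horizon `T` with symmetric uniformly bounded
negative definite `Wᵢ` and bounded `Vᵢ`, both endpoints of the Scaled VCG interval
converge to `1`, hence any admissible scaling sequence `c^N` converges to `1`. -/
theorem scaled_vcg_factor_tendsto_one_dynamic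
    (T : ℕ) (hT : 1 ≤ T)
    (m M vbar : ℝ) (hm : 0 < m) (hmM : m ≤ M) (hvbar : 0 < vbar)
    (W : ℕ → Matrix (Fin T) (Fin T) ℝ) (V : ℕ → Fin T → ℝ)
    (hWsymm : ∀ i : ℕ, 1 ≤ i → (W i).IsSymm)
    (hWlo : ∀ i : ℕ, 1 ≤ i →
      (W i + M • (1 : Matrix (Fin T) (Fin T) ℝ)).PosSemidef)
    (hWhi : ∀ i : ℕ, 1 ≤ i →
      (-(m • (1 : Matrix (Fin T) (Fin T) ℝ)) - W i).PosSemidef)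
    (hV : ∀ i : ℕ, 1 ≤ i → ‖V i‖ ≤ vbar)
    (Ftot : ℕ → ℝ) (H : ℕ → ℕ → ℝ) (Hmax : ℕ → ℝ)
    (hFtot : ∀ N : ℕ, 2 ≤ N → IsGreatest
      {v : ℝ | ∃ Ω : ℕ → Fin T → ℝ, ∑ j ∈ Finset.Icc 1 N, Ω j = 0 ∧
        v = ∑ j ∈ Finset.Icc 1 N, (Ω j ⬝ᵥ (W j *ᵥ Ω j) + V j ⬝ᵥ Ω j)} (Ftot N))
    (hH : ∀ N : ℕ, 2 ≤ N → ∀ i ∈ Finset.Icc 1 N, IsGreatest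
      {v : ℝ | ∃ Ω : ℕ → Fin T → ℝ, ∑ j ∈ (Finset.Icc 1 N).erase i, Ω j = 0 ∧
        v = ∑ j ∈ (Finset.Icc 1 N).erase i,
          (Ω j ⬝ᵥ (W j *ᵥ Ω j) + V j ⬝ᵥ Ω j)} (H N i))
    (hHmax : ∀ N : ℕ, 2 ≤ N → IsGreatest
      {v : ℝ | ∃ i ∈ Finset.Icc 1 N, v = H N i} (Hmax N))
    (hFpos : ∀ N : ℕ, 2 ≤ N → 0 < Ftot N)
    (hHpos : ∀ N : ℕ, 2 ≤ N → ∀ i ∈ Finset.Icc 1 N, 0 < H N i)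
    (hMPB : ∀ N : ℕ, 2 ≤ N →
      ((N : ℝ) - 1) * Hmax N ≤ ∑ i ∈ Finset.Icc 1 N, H N i) :
    Tendsto (fun N : ℕ => ((N : ℝ) - 1) * Ftot N / ∑ i ∈ Finset.Icc 1 N, H N i)
        atTop (nhds 1) ∧
      Tendsto (fun N : ℕ => Ftot N / Hmax N) atTop (nhds 1) ∧
      ∀ c : ℕ → ℝ,
        (∀ N : ℕ, 2 ≤ N →
          ((N : ℝ) - 1) * Ftot N / (∑ i ∈ Finset.Icc 1 N, H N i) ≤ c N ∧
            c N ≤ Ftot N / Hmax N) →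
        Tendsto c atTop (nhds 1) :=
  scaled_vcg_factor_tendsto_one_dynamic_general T m M hm hmM W V hWsymm hWlo hWhi Ftot H Hmax hFtot
    hH hHmax hFpos
end

section
/- Let T ≥ 1 and fix 0 < m ≤ M and v̄ > 0. Let Wᵢ (i ∈ ℕ, i ≥ 1) be symmetric negative definite T×T real matrices with −M·I ⪯ Wᵢ ⪯ −m·I, and Vᵢ ∈ ℝ^T with ‖Vᵢ‖ ≤ v̄. For each N ≥ 2 let Ω*(N) = (Ω*₁(N),…,Ω*_N(N)) ∈ (ℝ^T)^N be the unique maximizer of Σ_{i=1}^N (ΩᵢᵀWᵢΩᵢ + VᵢᵀΩᵢ) subject to Σ_{i=1}^N Ωᵢ = 0, and let Ψ*(N) = (Ψ*₂(N),…,Ψ*_N(N)) be the unique maximizer of Σ_{i=2}^N (ΩᵢᵀWᵢΩᵢ + VᵢᵀΩᵢ) subject to Σ_{i=2}^N Ωᵢ = 0. Define Γ(N) := (Σ_{i=1}^N Wᵢ⁻¹)⁻¹, the Lagrange multiplier vector λ*(N) := Γ(N)·Σ_{i=1}^N Wᵢ⁻¹Vᵢ ∈ ℝ^T, and the VCG payment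 of agent 1 as p₁(N) := Σ_{i=2}^N (Ψ*ᵢ(N)ᵀWᵢΨ*ᵢ(N) + VᵢᵀΨ*ᵢ(N)) − Σ_{i=2}^N (Ω*ᵢ(N)ᵀWᵢΩ*ᵢ(N) + VᵢᵀΩ*ᵢ(N)). Then lim_{N→∞} (λ*(N)ᵀΩ*₁(N) − p₁(N)) = 0. -/
/-!
The constrained maximizer is explicit: agent `i` plays `½ Wᵢ⁻¹ (λ - Vᵢ)`, the multiplier `λ`
being fixed by the balance constraint, and strict concavity makes this the only maximizer.
Substituting it, both welfare sums are quadratic in the multiplier. With `B = Σ_{i ≥ 2} Wᵢ⁻¹`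
and `d` the difference of the multipliers of the problems without and with agent `1`, one finds
`B d = W₁⁻¹ (λ - V₁)`, which is bounded uniformly in `N`, and `λᵀΩ₁ - p₁ = -¼ dᵀ B d`.
Since `-B ⪰ ((N - 1) / M) I`, this is `O(1 / (N - 1))`.
-/

open Finset Filter Matrix

open scoped MatrixOrder RealInnerProductSpace

section EuclideanNorm

variable {n : Type*} [Fintype n]

lemma dotProduct_eq_inner_toLp (x y : n → ℝ) :
    x ⬝ᵥ y = ⟪WithLp.toLp 2 x, WithLp.toLp 2 y⟫ := by
  rw [EuclideanSpace.inner_toLp_toLp, star_trivial, dotProduct_comm]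

lemma dotProduct_self_eq_norm_toLp_sq (x : n → ℝ) : x ⬝ᵥ x = ‖WithLp.toLp 2 x‖ ^ 2 := by
  rw [dotProduct_eq_inner_toLp, real_inner_self_eq_norm_sq]

lemma abs_dotProduct_le_norm_toLp_mul (x y : n → ℝ) :
    |x ⬝ᵥ y| ≤ ‖WithLp.toLp 2 x‖ * ‖WithLp.toLp 2 y‖ := by
  rw [dotProduct_eq_inner_toLp]
  exact abs_real_inner_le_norm _ _

end EuclideanNorm

namespace Matrix

variable {n : Type*}

lemma isSymm_of_posDef_neg {W : Matrix n n ℝ} (hW : (-W).PosDef) : W.IsSymm := by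
  simpa using hW.isHermitian.neg

variable [DecidableEq n]

lemma posDef_of_smul_one_le {Q : Matrix n n ℝ} {c : ℝ} (hc : 0 < c) (h : c • 1 ≤ Q) :
    Q.PosDef := by
  simpa using (PosDef.one.smul hc).add_posSemidef h

lemma posDef_neg_of_le_neg_smul_one {W : Matrix n n ℝ} {m : ℝ} (hm : 0 < m)
    (h : W ≤ -(m • 1)) : (-W).PosDef :=
  posDef_of_smul_one_le hm (le_neg.1 h)

variable [Fintype n]

theorem inv_neg {R : Type*} [CommRing R] (A : Matrix n n R) : (-A)⁻¹ = -A⁻¹ := by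
  by_cases h : IsUnit A.det
  · exact inv_eq_right_inv (by rw [neg_mul_neg, mul_nonsing_inv _ h])
  · have h' : ¬IsUnit (-A).det := by
      rwa [det_neg, IsUnit.mul_iff, and_iff_right ((isUnit_neg_one (α := R)).pow _)]
    rw [nonsing_inv_apply_not_isUnit _ h, nonsing_inv_apply_not_isUnit _ h', neg_zero]

lemma mul_dotProduct_self_le {Q : Matrix n n ℝ} {c : ℝ} (h : c • 1 ≤ Q) (x : n → ℝ) :
    c * (x ⬝ᵥ x) ≤ x ⬝ᵥ Q *ᵥ x := by
  have := h.dotProduct_mulVec_nonneg x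
  simp only [star_trivial, sub_mulVec, dotProduct_sub, smul_mulVec, one_mulVec, dotProduct_smul,
    smul_eq_mul] at this
  linarith

lemma mul_norm_toLp_le_norm_toLp_mulVec {Q : Matrix n n ℝ} {c : ℝ} (h : c • 1 ≤ Q)
    (x : n → ℝ) : c * ‖WithLp.toLp 2 x‖ ≤ ‖WithLp.toLp 2 (Q *ᵥ x)‖ := by
  rcases (norm_nonneg (WithLp.toLp 2 x)).eq_or_lt with hx | hx
  · rw [← hx, mul_zero]
    exact norm_nonneg _
  refine le_of_mul_le_mul_right ?_ hx
  calc c * ‖WithLp.toLp 2 x‖ * ‖WithLp.toLp 2 x‖ = c * (x ⬝ᵥ x) := by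
        rw [dotProduct_self_eq_norm_toLp_sq]; ring
    _ ≤ |x ⬝ᵥ Q *ᵥ x| := (mul_dotProduct_self_le h x).trans (le_abs_self _)
    _ ≤ ‖WithLp.toLp 2 (Q *ᵥ x)‖ * ‖WithLp.toLp 2 x‖ := by
        rw [mul_comm]; exact abs_dotProduct_le_norm_toLp_mul _ _

lemma abs_dotProduct_mulVec_le {Q : Matrix n n ℝ} {c : ℝ} (hc : 0 < c) (h : c • 1 ≤ -Q)
    (x : n → ℝ) : |x ⬝ᵥ Q *ᵥ x| ≤ ‖WithLp.toLp 2 (Q *ᵥ x)‖ ^ 2 / c := by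
  have hx : ‖WithLp.toLp 2 x‖ ≤ ‖WithLp.toLp 2 (Q *ᵥ x)‖ / c := by
    rw [le_div_iff₀' hc]
    simpa [neg_mulVec] using mul_norm_toLp_le_norm_toLp_mulVec h x
  calc |x ⬝ᵥ Q *ᵥ x| ≤ ‖WithLp.toLp 2 x‖ * ‖WithLp.toLp 2 (Q *ᵥ x)‖ :=
        abs_dotProduct_le_norm_toLp_mul _ _
    _ ≤ ‖WithLp.toLp 2 (Q *ᵥ x)‖ / c * ‖WithLp.toLp 2 (Q *ᵥ x)‖ := by gcongr
    _ = ‖WithLp.toLp 2 (Q *ᵥ x)‖ ^ 2 / c := by ring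

lemma inv_smul_one_le_inv {Q : Matrix n n ℝ} (hQ : Q.PosDef) {c : ℝ} (hc : 0 < c)
    (h : Q ≤ c • 1) : c⁻¹ • 1 ≤ Q⁻¹ := by
  have hdet : IsUnit Q.det := (isUnit_iff_isUnit_det Q).mp hQ.isUnit
  -- a congruence of `Q⁻¹` plus a nonnegative multiple of `c • 1 - Q`
  have key : Q⁻¹ - c⁻¹ • 1 =
      (1 - c⁻¹ • Q)ᴴ * Q⁻¹ * (1 - c⁻¹ • Q) + (c⁻¹ ^ 2) • (c • 1 - Q) := by
    rw [conjTranspose_sub, conjTranspose_one, conjTranspose_smul, hQ.isHermitian.eq,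
      star_trivial]
    simp only [sub_mul, mul_sub, one_mul, mul_one, smul_mul_assoc, mul_smul_comm,
      mul_nonsing_inv Q hdet, nonsing_inv_mul Q hdet, smul_sub, smul_smul]
    field_simp
    module
  rw [le_iff, key]
  exact (hQ.inv.posSemidef.conjTranspose_mul_mul_same _).add (h.smul (by positivity))

lemma norm_toLp_inv_mulVec_le {W : Matrix n n ℝ} {m : ℝ} (hm : 0 < m) (h : W ≤ -(m • 1))
    (v : n → ℝ) : ‖WithLp.toLp 2 (W⁻¹ *ᵥ v)‖ ≤ ‖WithLp.toLp 2 v‖ / m := by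
  have hW : IsUnit W := by simpa using (posDef_neg_of_le_neg_smul_one hm h).isUnit.neg
  rw [le_div_iff₀' hm]
  simpa [neg_mulVec, mulVec_mulVec, mul_nonsing_inv _ ((isUnit_iff_isUnit_det W).1 hW)] using
    mul_norm_toLp_le_norm_toLp_mulVec (le_neg.1 h) (W⁻¹ *ᵥ v)

end Matrix

section Welfare

variable {ι n : Type*} [Fintype n]

def quadUtility (W : Matrix n n ℝ) (V x : n → ℝ) : ℝ := x ⬝ᵥ W *ᵥ x + V ⬝ᵥ x

def socialWelfare (s : Finset ι) (W : ι → Matrix n n ℝ) (V X : ι → n → ℝ) : ℝ :=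
  ∑ i ∈ s, quadUtility (W i) (V i) (X i)

def IsWelfareMaximizer (s : Finset ι) (W : ι → Matrix n n ℝ) (V X : ι → n → ℝ) : Prop :=
  ∑ i ∈ s, X i = 0 ∧
    ∀ Y : ι → n → ℝ, ∑ i ∈ s, Y i = 0 → socialWelfare s W V Y ≤ socialWelfare s W V X

lemma socialWelfare_congr {s : Finset ι} {W : ι → Matrix n n ℝ} {V X Y : ι → n → ℝ}
    (h : ∀ i ∈ s, X i = Y i) : socialWelfare s W V X = socialWelfare s W V Y :=
  sum_congr rfl fun i hi => by rw [h i hi]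

lemma quadUtility_eq_add {W : Matrix n n ℝ} (hW : W.IsSymm) {V a r : n → ℝ}
    (ha : (2 : ℝ) • (W *ᵥ a) = r - V) (x : n → ℝ) :
    quadUtility W V x = quadUtility W V a + (x - a) ⬝ᵥ W *ᵥ (x - a) + r ⬝ᵥ (x - a) := by
  have hsymm : a ⬝ᵥ W *ᵥ x = x ⬝ᵥ W *ᵥ a := by
    rw [dotProduct_mulVec, ← mulVec_transpose, hW.eq, dotProduct_comm]
  rw [← sub_add_cancel r V, ← ha]
  simp only [quadUtility, mulVec_sub, dotProduct_sub, sub_dotProduct, add_dotProduct,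
    smul_dotProduct, smul_eq_mul, hsymm, dotProduct_comm (W *ᵥ a)]
  ring

variable {s : Finset ι} {W : ι → Matrix n n ℝ} {V : ι → n → ℝ}

theorem IsWelfareMaximizer.eq_of_stationary {X : ι → n → ℝ} (hX : IsWelfareMaximizer s W V X)
    (hW : ∀ i ∈ s, (-W i).PosDef) {r : n → ℝ} {a : ι → n → ℝ}
    (ha : ∀ i ∈ s, (2 : ℝ) • (W i *ᵥ a i) = r - V i) (ha0 : ∑ i ∈ s, a i = 0) :
    ∀ i ∈ s, X i = a i := by
  -- the multiplier terms `r ⬝ᵥ (X i - a i)` sum to zero on the constraint set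
  have hsplit : socialWelfare s W V X =
      socialWelfare s W V a + ∑ i ∈ s, (X i - a i) ⬝ᵥ W i *ᵥ (X i - a i) := by
    rw [socialWelfare, sum_congr rfl fun i hi =>
      quadUtility_eq_add (isSymm_of_posDef_neg (hW i hi)) (ha i hi) (X i),
      sum_add_distrib, sum_add_distrib, ← dotProduct_sum, sum_sub_distrib, hX.1, ha0,
      sub_zero, dotProduct_zero, add_zero, socialWelfare]
  have hnonpos : ∀ i ∈ s, (X i - a i) ⬝ᵥ W i *ᵥ (X i - a i) ≤ 0 := fun i hi => by
    simpa [neg_mulVec] using (hW i hi).posSemidef.dotProduct_mulVec_nonneg (X i - a i)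
  have hzero := (sum_eq_zero_iff_of_nonpos hnonpos).1
    (le_antisymm (sum_nonpos hnonpos) (by linarith [hX.2 a ha0]))
  intro i hi
  by_contra hne
  have hpos := (hW i hi).dotProduct_mulVec_pos (sub_ne_zero.2 hne)
  simp [neg_mulVec, hzero i hi] at hpos

variable [DecidableEq n]

noncomputable def stationaryPoint (W : ι → Matrix n n ℝ) (V : ι → n → ℝ) (r : n → ℝ) (i : ι) :
    n → ℝ :=
  (2 : ℝ)⁻¹ • ((W i)⁻¹ *ᵥ (r - V i))

noncomputable def multiplier (s : Finset ι) (W : ι → Matrix n n ℝ) (V : ι → n → ℝ) : n → ℝ :=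
  (∑ i ∈ s, (W i)⁻¹)⁻¹ *ᵥ ∑ i ∈ s, (W i)⁻¹ *ᵥ V i

lemma two_smul_mulVec_stationaryPoint {i : ι} (hW : IsUnit (W i)) (r : n → ℝ) :
    (2 : ℝ) • (W i *ᵥ stationaryPoint W V r i) = r - V i := by
  rw [stationaryPoint, mulVec_smul, mulVec_mulVec,
    mul_nonsing_inv _ ((isUnit_iff_isUnit_det _).1 hW), one_mulVec, smul_inv_smul₀ two_ne_zero]

lemma isUnit_sum_inv (hs : s.Nonempty) (hW : ∀ i ∈ s, (-W i).PosDef) :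
    IsUnit (∑ i ∈ s, (W i)⁻¹) := by
  have : (∑ i ∈ s, (-W i)⁻¹).PosDef := posDef_sum hs fun i hi => (hW i hi).inv
  simpa [Matrix.inv_neg] using this.isUnit.neg

lemma sum_inv_mulVec_multiplier (hs : s.Nonempty) (hW : ∀ i ∈ s, (-W i).PosDef) :
    (∑ i ∈ s, (W i)⁻¹) *ᵥ multiplier s W V = ∑ i ∈ s, (W i)⁻¹ *ᵥ V i := by
  rw [multiplier, mulVec_mulVec,
    mul_nonsing_inv _ ((isUnit_iff_isUnit_det _).1 (isUnit_sum_inv hs hW)), one_mulVec]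

lemma sum_stationaryPoint_multiplier (hs : s.Nonempty) (hW : ∀ i ∈ s, (-W i).PosDef) :
    ∑ i ∈ s, stationaryPoint W V (multiplier s W V) i = 0 := by
  simp only [stationaryPoint, ← smul_sum, mulVec_sub, sum_sub_distrib, ← sum_mulVec,
    sum_inv_mulVec_multiplier hs hW, sub_self, smul_zero]

theorem IsWelfareMaximizer.eq_stationaryPoint {X : ι → n → ℝ}
    (hX : IsWelfareMaximizer s W V X) (hs : s.Nonempty) (hW : ∀ i ∈ s, (-W i).PosDef) :
    ∀ i ∈ s, X i = stationaryPoint W V (multiplier s W V) i :=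
  hX.eq_of_stationary hW
    (fun i hi => two_smul_mulVec_stationaryPoint (by simpa using (hW i hi).isUnit.neg) _)
    (sum_stationaryPoint_multiplier hs hW)

lemma quadUtility_stationaryPoint {i : ι} (hW : (-W i).PosDef) (r : n → ℝ) :
    quadUtility (W i) (V i) (stationaryPoint W V r i) =
      4⁻¹ * (r ⬝ᵥ (W i)⁻¹ *ᵥ r - V i ⬝ᵥ (W i)⁻¹ *ᵥ V i) := by
  have hsymm : r ⬝ᵥ (W i)⁻¹ *ᵥ V i = V i ⬝ᵥ (W i)⁻¹ *ᵥ r := by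
    rw [dotProduct_mulVec, ← mulVec_transpose, (isSymm_of_posDef_neg hW).inv.eq,
      dotProduct_comm]
  have hWa : W i *ᵥ stationaryPoint W V r i = (2 : ℝ)⁻¹ • (r - V i) := by
    rw [← two_smul_mulVec_stationaryPoint (by simpa using hW.isUnit.neg) r,
      inv_smul_smul₀ two_ne_zero]
  rw [quadUtility, hWa, stationaryPoint]
  simp only [mulVec_sub, dotProduct_sub, sub_dotProduct, smul_dotProduct, dotProduct_smul,
    smul_eq_mul, dotProduct_comm ((W i)⁻¹ *ᵥ _), hsymm]
  ring

lemma socialWelfare_stationaryPoint (hW : ∀ i ∈ s, (-W i).PosDef) (r : n → ℝ) :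
    socialWelfare s W V (stationaryPoint W V r) =
      4⁻¹ * (r ⬝ᵥ (∑ i ∈ s, (W i)⁻¹) *ᵥ r - ∑ i ∈ s, V i ⬝ᵥ (W i)⁻¹ *ᵥ V i) := by
  rw [socialWelfare, sum_congr rfl fun i hi => quadUtility_stationaryPoint (hW i hi) r,
    ← mul_sum, sum_sub_distrib, sum_mulVec, dotProduct_sum]

end Welfare

section Payments

variable {ι n : Type*} [Fintype n] [DecidableEq n] {s : Finset ι} {W : ι → Matrix n n ℝ}
  {V : ι → n → ℝ}

lemma sum_inv_mulVec_multiplier_sub [DecidableEq ι] {i₀ : ι} (hi₀ : i₀ ∉ s) (hs : s.Nonempty)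
    (hW : ∀ i ∈ insert i₀ s, (-W i).PosDef) :
    (∑ i ∈ s, (W i)⁻¹) *ᵥ (multiplier s W V - multiplier (insert i₀ s) W V) =
      (W i₀)⁻¹ *ᵥ (multiplier (insert i₀ s) W V - V i₀) := by
  have hA := sum_inv_mulVec_multiplier (V := V) (insert_nonempty i₀ s) hW
  rw [sum_insert hi₀, sum_insert hi₀, add_mulVec] at hA
  rw [mulVec_sub, sum_inv_mulVec_multiplier hs fun i hi => hW i (mem_insert_of_mem hi),
    mulVec_sub]
  linear_combination (norm := module) -hA

lemma lagrange_payment_sub_vcg_payment_eq (hW : ∀ i ∈ s, (-W i).PosDef) {i₀ : ι} {r σ : n → ℝ}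
    (h : (∑ i ∈ s, (W i)⁻¹) *ᵥ (σ - r) = (W i₀)⁻¹ *ᵥ (r - V i₀)) :
    r ⬝ᵥ stationaryPoint W V r i₀ - (socialWelfare s W V (stationaryPoint W V σ) -
      socialWelfare s W V (stationaryPoint W V r)) =
      -4⁻¹ * ((σ - r) ⬝ᵥ (∑ i ∈ s, (W i)⁻¹) *ᵥ (σ - r)) := by
  have hsymm : r ⬝ᵥ (∑ i ∈ s, (W i)⁻¹) *ᵥ σ = σ ⬝ᵥ (∑ i ∈ s, (W i)⁻¹) *ᵥ r := by
    rw [dotProduct_mulVec, ← mulVec_transpose, transpose_sum,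
      sum_congr rfl fun i hi => (isSymm_of_posDef_neg (hW i hi)).inv.eq, dotProduct_comm]
  rw [socialWelfare_stationaryPoint hW, socialWelfare_stationaryPoint hW, stationaryPoint,
    dotProduct_smul, ← h, smul_eq_mul]
  simp only [mulVec_sub, dotProduct_sub, sub_dotProduct, hsymm]
  ring

lemma smul_one_le_neg_sum_inv {M : ℝ} (hM : 0 < M) (hWlo : ∀ i ∈ s, -(M • 1) ≤ W i)
    (hW : ∀ i ∈ s, (-W i).PosDef) : ((#s : ℝ) / M) • 1 ≤ -∑ i ∈ s, (W i)⁻¹ :=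
  calc ((#s : ℝ) / M) • (1 : Matrix n n ℝ) = ∑ i ∈ s, M⁻¹ • (1 : Matrix n n ℝ) := by
        rw [sum_const, ← Nat.cast_smul_eq_nsmul ℝ, smul_smul, div_eq_mul_inv]
    _ ≤ ∑ i ∈ s, -(W i)⁻¹ := sum_le_sum fun i hi => by
        simpa [Matrix.inv_neg] using inv_smul_one_le_inv (hW i hi) hM (neg_le.1 (hWlo i hi))
    _ = -∑ i ∈ s, (W i)⁻¹ := sum_neg_distrib _

lemma norm_toLp_multiplier_le {m M β : ℝ} (hm : 0 < m) (hmM : m ≤ M) (hs : s.Nonempty)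
    (hWlo : ∀ i ∈ s, -(M • 1) ≤ W i) (hWhi : ∀ i ∈ s, W i ≤ -(m • 1))
    (hV : ∀ i ∈ s, ‖WithLp.toLp 2 (V i)‖ ≤ β) :
    ‖WithLp.toLp 2 (multiplier s W V)‖ ≤ M / m * β := by
  have hW i (hi : i ∈ s) : (-W i).PosDef := posDef_neg_of_le_neg_smul_one hm (hWhi i hi)
  have hc : 0 < (#s : ℝ) / M := div_pos (mod_cast hs.card_pos) (hm.trans_le hmM)
  have key : (#s : ℝ) / M * ‖WithLp.toLp 2 (multiplier s W V)‖ ≤ #s * (β / m) :=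
    calc (#s : ℝ) / M * ‖WithLp.toLp 2 (multiplier s W V)‖
        ≤ ‖WithLp.toLp 2 ((-∑ i ∈ s, (W i)⁻¹) *ᵥ multiplier s W V)‖ :=
          mul_norm_toLp_le_norm_toLp_mulVec (smul_one_le_neg_sum_inv (hm.trans_le hmM) hWlo hW) _
      _ = ‖∑ i ∈ s, WithLp.toLp 2 ((W i)⁻¹ *ᵥ V i)‖ := by
          rw [neg_mulVec, sum_inv_mulVec_multiplier hs hW, WithLp.toLp_neg, norm_neg,
            WithLp.toLp_sum]
      _ ≤ ∑ i ∈ s, β / m := norm_sum_le_of_le _ fun i hi =>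
          (norm_toLp_inv_mulVec_le hm (hWhi i hi) _).trans (by gcongr; exact hV i hi)
      _ = #s * (β / m) := by rw [sum_const, nsmul_eq_mul]
  calc ‖WithLp.toLp 2 (multiplier s W V)‖ ≤ #s * (β / m) / (#s / M) := (le_div_iff₀' hc).2 key
    _ = M / m * β := by field_simp [hs.card_pos.ne']

lemma norm_toLp_inv_mulVec_multiplier_sub_le {m M β : ℝ} (hm : 0 < m) (hmM : m ≤ M)
    (hs : s.Nonempty) (hWlo : ∀ i ∈ s, -(M • 1) ≤ W i) (hWhi : ∀ i ∈ s, W i ≤ -(m • 1))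
    (hV : ∀ i ∈ s, ‖WithLp.toLp 2 (V i)‖ ≤ β) {i₀ : ι} (hi₀ : i₀ ∈ s) :
    ‖WithLp.toLp 2 ((W i₀)⁻¹ *ᵥ (multiplier s W V - V i₀))‖ ≤ (M / m + 1) * β / m :=
  calc ‖WithLp.toLp 2 ((W i₀)⁻¹ *ᵥ (multiplier s W V - V i₀))‖
      ≤ ‖WithLp.toLp 2 (multiplier s W V - V i₀)‖ / m :=
        norm_toLp_inv_mulVec_le hm (hWhi i₀ hi₀) _
    _ ≤ (M / m * β + β) / m := by
        rw [WithLp.toLp_sub]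
        gcongr
        exact (norm_sub_le _ _).trans
          (add_le_add (norm_toLp_multiplier_le hm hmM hs hWlo hWhi hV) (hV i₀ hi₀))
    _ = (M / m + 1) * β / m := by ring

theorem abs_lagrange_payment_sub_vcg_payment_le [DecidableEq ι] {m M β : ℝ} (hm : 0 < m)
    (hmM : m ≤ M) {i₀ : ι} (hi₀ : i₀ ∉ s) (hs : s.Nonempty)
    (hWlo : ∀ i ∈ insert i₀ s, -(M • 1) ≤ W i) (hWhi : ∀ i ∈ insert i₀ s, W i ≤ -(m • 1))
    (hV : ∀ i ∈ insert i₀ s, ‖WithLp.toLp 2 (V i)‖ ≤ β) {X Y : ι → n → ℝ}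
    (hX : IsWelfareMaximizer (insert i₀ s) W V X) (hY : IsWelfareMaximizer s W V Y) :
    |multiplier (insert i₀ s) W V ⬝ᵥ X i₀ - (socialWelfare s W V Y - socialWelfare s W V X)| ≤
      M * ((M / m + 1) * β / m) ^ 2 / 4 / #s := by
  have hW i (hi : i ∈ insert i₀ s) : (-W i).PosDef :=
    posDef_neg_of_le_neg_smul_one hm (hWhi i hi)
  have hWs i (hi : i ∈ s) : (-W i).PosDef := hW i (mem_insert_of_mem hi)
  set r := multiplier (insert i₀ s) W V
  have hXr := hX.eq_stationaryPoint (insert_nonempty i₀ s) hW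
  have hw := norm_toLp_inv_mulVec_multiplier_sub_le hm hmM (insert_nonempty i₀ s) hWlo hWhi hV
    (mem_insert_self i₀ s)
  have hc : 0 < (#s : ℝ) / M := div_pos (mod_cast hs.card_pos) (hm.trans_le hmM)
  rw [hXr i₀ (mem_insert_self _ _), socialWelfare_congr (hY.eq_stationaryPoint hs hWs),
    socialWelfare_congr fun i hi => hXr i (mem_insert_of_mem hi),
    lagrange_payment_sub_vcg_payment_eq hWs (sum_inv_mulVec_multiplier_sub hi₀ hs hW),
    abs_mul, abs_neg, abs_of_pos (by norm_num : (0 : ℝ) < 4⁻¹)]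
  calc 4⁻¹ * |(multiplier s W V - r) ⬝ᵥ (∑ i ∈ s, (W i)⁻¹) *ᵥ (multiplier s W V - r)|
      ≤ 4⁻¹ * (‖WithLp.toLp 2 ((W i₀)⁻¹ *ᵥ (r - V i₀))‖ ^ 2 / (#s / M)) := by
        rw [← sum_inv_mulVec_multiplier_sub hi₀ hs hW]
        gcongr
        exact abs_dotProduct_mulVec_le hc
          (smul_one_le_neg_sum_inv (hm.trans_le hmM) (fun i hi => hWlo i (mem_insert_of_mem hi))
            hWs) _
    _ ≤ 4⁻¹ * (((M / m + 1) * β / m) ^ 2 / (#s / M)) := by gcongr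
    _ = M * ((M / m + 1) * β / m) ^ 2 / 4 / #s := by field_simp

end Payments

theorem vcg_payment_tendsto_lagrange_payment_dynamic_general
    (T : ℕ)
    (m M vbar : ℝ) (hm : 0 < m) (hmM : m ≤ M)
    (W : ℕ → Matrix (Fin T) (Fin T) ℝ) (V : ℕ → Fin T → ℝ)
    (hWlo : ∀ i : ℕ, 1 ≤ i →
      (W i + M • (1 : Matrix (Fin T) (Fin T) ℝ)).PosSemidef)
    (hWhi : ∀ i : ℕ, 1 ≤ i →
      (-(m • (1 : Matrix (Fin T) (Fin T) ℝ)) - W i).PosSemidef)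
    (hV : ∀ i : ℕ, 1 ≤ i → ‖V i‖ ≤ vbar)
    (Ω Ψ : ℕ → ℕ → Fin T → ℝ)
    (hΩfeas : ∀ N : ℕ, 2 ≤ N → ∑ j ∈ Finset.Icc 1 N, Ω N j = 0)
    (hΩopt : ∀ N : ℕ, 2 ≤ N → ∀ v : ℕ → Fin T → ℝ,
      ∑ j ∈ Finset.Icc 1 N, v j = 0 →
      ∑ j ∈ Finset.Icc 1 N, (v j ⬝ᵥ (W j *ᵥ v j) + V j ⬝ᵥ v j) ≤
        ∑ j ∈ Finset.Icc 1 N, (Ω N j ⬝ᵥ (W j *ᵥ Ω N j) + V j ⬝ᵥ Ω N j))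
    (hΨfeas : ∀ N : ℕ, 2 ≤ N → ∑ j ∈ Finset.Icc 2 N, Ψ N j = 0)
    (hΨopt : ∀ N : ℕ, 2 ≤ N → ∀ v : ℕ → Fin T → ℝ,
      ∑ j ∈ Finset.Icc 2 N, v j = 0 →
      ∑ j ∈ Finset.Icc 2 N, (v j ⬝ᵥ (W j *ᵥ v j) + V j ⬝ᵥ v j) ≤
        ∑ j ∈ Finset.Icc 2 N, (Ψ N j ⬝ᵥ (W j *ᵥ Ψ N j) + V j ⬝ᵥ Ψ N j))
    (Γ : ℕ → Matrix (Fin T) (Fin T) ℝ) (lam : ℕ → Fin T → ℝ) (p1 : ℕ → ℝ)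
    (hΓ : ∀ N : ℕ, Γ N = (∑ i ∈ Finset.Icc 1 N, (W i)⁻¹)⁻¹)
    (hlam : ∀ N : ℕ, lam N = Γ N *ᵥ ∑ i ∈ Finset.Icc 1 N, (W i)⁻¹ *ᵥ V i)
    (hp1 : ∀ N : ℕ, p1 N =
      (∑ i ∈ Finset.Icc 2 N, (Ψ N i ⬝ᵥ (W i *ᵥ Ψ N i) + V i ⬝ᵥ Ψ N i)) -
        ∑ i ∈ Finset.Icc 2 N, (Ω N i ⬝ᵥ (W i *ᵥ Ω N i) + V i ⬝ᵥ Ω N i)) :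
    Tendsto (fun N : ℕ => lam N ⬝ᵥ Ω N 1 - p1 N) atTop (nhds 0) := by
  obtain ⟨β, hβ⟩ : ∃ β, ∀ i, 1 ≤ i → ‖WithLp.toLp 2 (V i)‖ ≤ β :=
    ⟨_, fun i hi => ((PiLp.lipschitzWith_toLp 2 _).norm_le_mul rfl (V i)).trans
      (mul_le_mul_of_nonneg_left (hV i hi) NNReal.zero_le_coe)⟩
  have hbound : ∀ N, 2 ≤ N → ‖lam N ⬝ᵥ Ω N 1 - p1 N‖ ≤
      M * ((M / m + 1) * β / m) ^ 2 / 4 / #(Icc 2 N) := by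
    intro N hN
    have hIcc : insert 1 (Icc 2 N) = Icc 1 N := insert_Icc_add_one_left_eq_Icc (by omega)
    have hpos i (hi : i ∈ insert 1 (Icc 2 N)) : 1 ≤ i := by
      rw [hIcc] at hi; exact (mem_Icc.1 hi).1
    have := abs_lagrange_payment_sub_vcg_payment_le hm hmM (by simp) (nonempty_Icc.2 hN)
      (fun i hi => by simpa [le_iff] using hWlo i (hpos i hi)) (fun i hi => hWhi i (hpos i hi))
      (fun i hi => hβ i (hpos i hi)) (X := Ω N) (Y := Ψ N)
      (by rw [hIcc]; exact ⟨hΩfeas N hN, hΩopt N hN⟩) ⟨hΨfeas N hN, hΨopt N hN⟩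
    rw [hIcc] at this
    rwa [Real.norm_eq_abs, hlam, hΓ, hp1]
  refine squeeze_zero_norm' (eventually_atTop.2 ⟨2, hbound⟩) ?_
  refine (tendsto_const_div_atTop_nhds_zero_nat _).comp ?_
  simpa using tendsto_sub_atTop_nat 1

/-- **Theorem 4, part 2 (block-quadratic form).** For agents with quadratic utilities
`ΩᵢᵀWᵢΩᵢ + VᵢᵀΩᵢ` over a horizon `T`, symmetric uniformly bounded negative definite
`Wᵢ` and bounded `Vᵢ`, the VCG payment `p₁(N)` of agent `1` converges to its Lagrange
payment `λ*(N)ᵀΩ*₁(N)` as the number of agents grows, where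
`λ*(N) = (Σᵢ Wᵢ⁻¹)⁻¹ · Σᵢ Wᵢ⁻¹Vᵢ` collects the Lagrange multipliers of the balance
constraint. -/
theorem vcg_payment_tendsto_lagrange_payment_dynamic
    (T : ℕ) (hT : 1 ≤ T)
    (m M vbar : ℝ) (hm : 0 < m) (hmM : m ≤ M) (hvbar : 0 < vbar)
    (W : ℕ → Matrix (Fin T) (Fin T) ℝ) (V : ℕ → Fin T → ℝ)
    (hWsymm : ∀ i : ℕ, 1 ≤ i → (W i).IsSymm)
    (hWlo : ∀ i : ℕ, 1 ≤ i →
      (W i + M • (1 : Matrix (Fin T) (Fin T) ℝ)).PosSemidef)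
    (hWhi : ∀ i : ℕ, 1 ≤ i →
      (-(m • (1 : Matrix (Fin T) (Fin T) ℝ)) - W i).PosSemidef)
    (hV : ∀ i : ℕ, 1 ≤ i → ‖V i‖ ≤ vbar)
    (Ω Ψ : ℕ → ℕ → Fin T → ℝ)
    (hΩfeas : ∀ N : ℕ, 2 ≤ N → ∑ j ∈ Finset.Icc 1 N, Ω N j = 0)
    (hΩopt : ∀ N : ℕ, 2 ≤ N → ∀ v : ℕ → Fin T → ℝ,
      ∑ j ∈ Finset.Icc 1 N, v j = 0 →
      ∑ j ∈ Finset.Icc 1 N, (v j ⬝ᵥ (W j *ᵥ v j) + V j ⬝ᵥ v j) ≤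
        ∑ j ∈ Finset.Icc 1 N, (Ω N j ⬝ᵥ (W j *ᵥ Ω N j) + V j ⬝ᵥ Ω N j))
    (hΨfeas : ∀ N : ℕ, 2 ≤ N → ∑ j ∈ Finset.Icc 2 N, Ψ N j = 0)
    (hΨopt : ∀ N : ℕ, 2 ≤ N → ∀ v : ℕ → Fin T → ℝ,
      ∑ j ∈ Finset.Icc 2 N, v j = 0 →
      ∑ j ∈ Finset.Icc 2 N, (v j ⬝ᵥ (W j *ᵥ v j) + V j ⬝ᵥ v j) ≤
        ∑ j ∈ Finset.Icc 2 N, (Ψ N j ⬝ᵥ (W j *ᵥ Ψ N j) + V j ⬝ᵥ Ψ N j))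
    (Γ : ℕ → Matrix (Fin T) (Fin T) ℝ) (lam : ℕ → Fin T → ℝ) (p1 : ℕ → ℝ)
    (hΓ : ∀ N : ℕ, Γ N = (∑ i ∈ Finset.Icc 1 N, (W i)⁻¹)⁻¹)
    (hlam : ∀ N : ℕ, lam N = Γ N *ᵥ ∑ i ∈ Finset.Icc 1 N, (W i)⁻¹ *ᵥ V i)
    (hp1 : ∀ N : ℕ, p1 N =
      (∑ i ∈ Finset.Icc 2 N, (Ψ N i ⬝ᵥ (W i *ᵥ Ψ N i) + V i ⬝ᵥ Ψ N i)) -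
        ∑ i ∈ Finset.Icc 2 N, (Ω N i ⬝ᵥ (W i *ᵥ Ω N i) + V i ⬝ᵥ Ω N i)) :
    Tendsto (fun N : ℕ => lam N ⬝ᵥ Ω N 1 - p1 N) atTop (nhds 0) :=
  vcg_payment_tendsto_lagrange_payment_dynamic_general T m M vbar hm hmM W V hWlo hWhi hV Ω Ψ hΩfeas
    hΩopt hΨfeas hΨopt Γ lam p1 hΓ hlam hp1
end
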